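/- arXiv:1310.7117 — 6 statements merged into one kernel-verified Lean document; each statement's English description precedes it below -/
import Mathlib

section
/- Let i₂ < i₁ be positive integers with 2i₂ ≠ i₁ and i₂ ≥ 2. Then there exists a word w of length 2i₁ over a two-letter alphabet such that w is {i₂, i₁}-squarefree, w_t = w_{t+i₁} for all 0 < t < i₁, w_t = w_{t+i₂} for all 0 < t < i₂, w_{i₁} ≠ w_{i₂}, w_{i₁} ≠ w_{2i₁}, and w_{i₂} ≠ w_{2i₂}. -/
lemma exists_mult (d a : ℕ) (hd : 0 < d) : ∃ q, a ≤ d * q ∧ d * q < a + d := by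
  refine ⟨(a + d - 1) / d, ?_, ?_⟩ <;>
  · have h1 := Nat.div_add_mod (a + d - 1) d
    have h2 := Nat.mod_lt (a + d - 1) hd
    omega

abbrev deProp (i₂ i₁ : ℕ) : Prop :=
  ∃ w : ℕ → Fin 2,
      (¬ ∃ i ∈ ({i₂, i₁} : Set ℕ), ∃ x, 1 ≤ x ∧ x + 2 * i - 1 ≤ 2 * i₁ ∧
        ∀ t < i, w (x + t) = w (x + t + i)) ∧
      (∀ t, 1 ≤ t → t < i₁ → w t = w (t + i₁)) ∧
      (∀ t, 1 ≤ t → t < i₂ → w t = w (t + i₂)) ∧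
      w i₁ ≠ w i₂ ∧ w i₁ ≠ w (2 * i₁) ∧ w i₂ ≠ w (2 * i₂)

/-- word for case `i₂ < i₁ < 2 i₂` : ones exactly at `i₂`, `i₁+i₂`, `2 i₁`. -/
def wB (i₂ i₁ t : ℕ) : Fin 2 := if t = i₂ ∨ t = i₁ + i₂ ∨ t = 2 * i₁ then 1 else 0

lemma caseB (i₂ i₁ : ℕ) (h2 : 2 ≤ i₂) (hlt : i₂ < i₁) (hB : i₁ < 2 * i₂) :
    deProp i₂ i₁ := by
  refine ⟨wB i₂ i₁, ?_, ?_, ?_, ?_, ?_, ?_⟩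
  · rintro ⟨i, hi, x, hx1, hx2, hH⟩
    simp only [Set.mem_insert_iff, Set.mem_singleton_iff] at hi
    rcases hi with hi | hi <;> subst i
    · by_cases hx : x ≤ i₂
      · have h := hH (i₂ - x) (by omega)
        rw [show x + (i₂ - x) + i₂ = 2 * i₂ by omega,
            show x + (i₂ - x) = i₂ by omega] at h
        simp only [wB] at h
        split_ifs at h with h1 h2' <;>
          first | (exact absurd h (by decide)) | omega | tauto
      · have h := hH (i₁ - x) (by omega)
        rw [show x + (i₁ - x) + i₂ = i₁ + i₂ by omega,
            show x + (i₁ - x) = i₁ by omega] at h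
        simp only [wB] at h
        split_ifs at h with h1 h2' <;>
          first | (exact absurd h (by decide)) | omega | tauto
    · have hx : x = 1 := by omega
      subst hx
      have h := hH (i₁ - 1) (by omega)
      rw [show 1 + (i₁ - 1) + i₁ = 2 * i₁ by omega,
          show 1 + (i₁ - 1) = i₁ by omega] at h
      simp only [wB] at h
      split_ifs at h with h1 h2' <;>
          first | (exact absurd h (by decide)) | omega | tauto
  · intro t h1 ht
    simp only [wB]
    split_ifs with ha hb <;> first | rfl | (exfalso; omega)
  · intro t h1 ht
    simp only [wB]
    split_ifs with ha hb <;> first | rfl | (exfalso; omega)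
  · simp only [wB]
    split_ifs with ha hb <;> first | (exfalso; omega) | (exfalso; tauto) | decide
  · simp only [wB]
    split_ifs with ha hb <;> first | (exfalso; omega) | (exfalso; tauto) | decide
  · simp only [wB]
    split_ifs with ha hb <;> first | (exfalso; omega) | (exfalso; tauto) | decide

/-- word for case `2 i₂ < i₁`, `¬ i₂ ∣ i₁`. -/
def wA (i₂ i₁ t : ℕ) : Fin 2 :=
  if (2 * i₂ ∣ t ∧ t ≤ i₁) ∨ t = i₁ ∨ (i₁ ≤ t ∧ t < 2 * i₁ ∧ 2 * i₂ ∣ (t - i₁))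
  then 1 else 0

lemma caseA (i₂ i₁ : ℕ) (h2 : 2 ≤ i₂) (hlt : i₂ < i₁) (hA : 2 * i₂ < i₁)
    (hnd2 : ¬ i₂ ∣ i₁) : deProp i₂ i₁ := by
  have h22 : i₂ ∣ 2 * i₂ := ⟨2, by ring⟩
  have vi1 : wA i₂ i₁ i₁ = 1 := by
    simp only [wA]; split_ifs with hc
    · rfl
    · exact absurd (by tauto) hc
  have v2i1 : wA i₂ i₁ (2 * i₁) = 0 := by
    simp only [wA]; split_ifs with hc
    · exfalso; rcases hc with ⟨_, h5⟩ | h5 | ⟨_, h5, _⟩ <;> omega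
    · rfl
  have vi2 : wA i₂ i₁ i₂ = 0 := by
    simp only [wA]; split_ifs with hc
    · exfalso
      rcases hc with ⟨h5, _⟩ | h5 | ⟨h5, _, _⟩
      · have := Nat.le_of_dvd (by omega) h5; omega
      · omega
      · omega
    · rfl
  have v2i2 : wA i₂ i₁ (2 * i₂) = 1 := by
    simp only [wA]; split_ifs with hc
    · rfl
    · exact absurd (Or.inl ⟨dvd_refl _, by omega⟩) hc
  refine ⟨wA i₂ i₁, ?_, ?_, ?_, ?_, ?_, ?_⟩
  · rintro ⟨i, hi, x, hx1, hx2, hH⟩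
    simp only [Set.mem_insert_iff, Set.mem_singleton_iff] at hi
    rcases hi with hi | hi <;> subst i
    · -- no square of length i₂
      by_cases hR1 : x + 2 * i₂ - 1 ≤ i₁
      · -- window inside the first block
        obtain ⟨q, hq1, hq2⟩ := exists_mult (2 * i₂) x (by omega)
        set m := 2 * i₂ * q with hm
        have hdm : 2 * i₂ ∣ m := dvd_mul_right _ _
        have vm : wA i₂ i₁ m = 1 := by
          simp only [wA]; split_ifs with hc
          · rfl
          · exact absurd (Or.inl ⟨hdm, by omega⟩) hc
        by_cases hsplit : x + i₂ ≤ m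
        · have h := hH (m - i₂ - x) (by omega)
          rw [show x + (m - i₂ - x) + i₂ = m by omega,
              show x + (m - i₂ - x) = m - i₂ by omega] at h
          have v1 : wA i₂ i₁ (m - i₂) = 0 := by
            simp only [wA]; split_ifs with hc
            · exfalso
              rcases hc with ⟨hd, _⟩ | h5 | ⟨h5, _, _⟩
              · have h5 := Nat.dvd_sub hdm hd
                rw [show m - (m - i₂) = i₂ by omega] at h5
                have := Nat.le_of_dvd (by omega) h5; omega
              · omega
              · omega
            · rfl
          rw [v1, vm] at h; exact absurd h (by decide)
        · have h := hH (m - x) (by omega)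
          rw [show x + (m - x) + i₂ = m + i₂ by omega,
              show x + (m - x) = m by omega] at h
          have v1 : wA i₂ i₁ (m + i₂) = 0 := by
            simp only [wA]; split_ifs with hc
            · exfalso
              rcases hc with ⟨hd, _⟩ | h5 | ⟨h5, h6, _⟩
              · have h5 := Nat.dvd_sub hd hdm
                rw [show m + i₂ - m = i₂ by omega] at h5
                have := Nat.le_of_dvd (by omega) h5; omega
              · -- m + i₂ = i₁ would give i₂ ∣ i₁
                refine hnd2 ?_
                rw [← h5]
                exact dvd_add (dvd_trans h22 hdm) (dvd_refl i₂)
              · -- i₁ ≤ m + i₂ ≤ x + 2i₂ - 1 ≤ i₁ forces m + i₂ = i₁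
                refine hnd2 ?_
                rw [show i₁ = m + i₂ by omega]
                exact dvd_add (dvd_trans h22 hdm) (dvd_refl i₂)
            · rfl
          rw [vm, v1] at h; exact absurd h (by decide)
      · by_cases hS : x ≤ i₁
        · -- window straddles i₁
          by_cases hsplit : x + i₂ ≤ i₁
          · have h := hH (i₁ - i₂ - x) (by omega)
            rw [show x + (i₁ - i₂ - x) + i₂ = i₁ by omega,
                show x + (i₁ - i₂ - x) = i₁ - i₂ by omega] at h
            have v1 : wA i₂ i₁ (i₁ - i₂) = 0 := by
              simp only [wA]; split_ifs with hc
              · exfalso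
                rcases hc with ⟨hd, _⟩ | h5 | ⟨h5, _, _⟩
                · refine hnd2 ?_
                  have h5 : i₂ ∣ i₁ - i₂ := dvd_trans h22 hd
                  have h6 := Nat.dvd_add h5 (dvd_refl i₂)
                  rwa [show i₁ - i₂ + i₂ = i₁ by omega] at h6
                · omega
                · omega
              · rfl
            rw [v1, vi1] at h; exact absurd h (by decide)
          · have h := hH (i₁ - x) (by omega)
            rw [show x + (i₁ - x) + i₂ = i₁ + i₂ by omega,
                show x + (i₁ - x) = i₁ by omega] at h
            have v1 : wA i₂ i₁ (i₁ + i₂) = 0 := by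
              simp only [wA]; split_ifs with hc
              · exfalso
                rcases hc with ⟨_, h5⟩ | h5 | ⟨_, _, hd⟩
                · omega
                · omega
                · rw [show i₁ + i₂ - i₁ = i₂ by omega] at hd
                  have := Nat.le_of_dvd (by omega) hd; omega
              · rfl
            rw [vi1, v1] at h; exact absurd h (by decide)
        · -- window inside the second block
          obtain ⟨q, hq1, hq2⟩ := exists_mult (2 * i₂) (x - i₁) (by omega)
          set M := 2 * i₂ * q with hM
          have hdM : 2 * i₂ ∣ M := dvd_mul_right _ _
          have hM2 : 2 * i₂ ≤ M := Nat.le_of_dvd (by omega) hdM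
          have hne : i₁ + M ≠ 2 * i₁ := by
            intro hcon
            refine hnd2 (dvd_trans h22 ?_)
            rw [show i₁ = M by omega]; exact hdM
          have vm : wA i₂ i₁ (i₁ + M) = 1 := by
            simp only [wA]; split_ifs with hc
            · rfl
            · refine absurd (Or.inr (Or.inr ⟨by omega, by omega, ?_⟩)) hc
              rw [show i₁ + M - i₁ = M by omega]; exact hdM
          by_cases hsplit : x + i₂ ≤ i₁ + M
          · have h := hH (i₁ + M - i₂ - x) (by omega)
            rw [show x + (i₁ + M - i₂ - x) + i₂ = i₁ + M by omega,
                show x + (i₁ + M - i₂ - x) = i₁ + M - i₂ by omega] at h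
            have v1 : wA i₂ i₁ (i₁ + M - i₂) = 0 := by
              simp only [wA]; split_ifs with hc
              · exfalso
                rcases hc with ⟨_, h5⟩ | h5 | ⟨_, _, hd⟩
                · omega
                · omega
                · rw [show i₁ + M - i₂ - i₁ = M - i₂ by omega] at hd
                  have h5 := Nat.dvd_sub hdM hd
                  rw [show M - (M - i₂) = i₂ by omega] at h5
                  have := Nat.le_of_dvd (by omega) h5; omega
              · rfl
            rw [v1, vm] at h; exact absurd h (by decide)
          · have h := hH (i₁ + M - x) (by omega)
            rw [show x + (i₁ + M - x) + i₂ = i₁ + M + i₂ by omega,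
                show x + (i₁ + M - x) = i₁ + M by omega] at h
            have v1 : wA i₂ i₁ (i₁ + M + i₂) = 0 := by
              simp only [wA]; split_ifs with hc
              · exfalso
                rcases hc with ⟨_, h5⟩ | h5 | ⟨_, _, hd⟩
                · omega
                · omega
                · rw [show i₁ + M + i₂ - i₁ = M + i₂ by omega] at hd
                  have h5 := Nat.dvd_sub hd hdM
                  rw [show M + i₂ - M = i₂ by omega] at h5
                  have := Nat.le_of_dvd (by omega) h5; omega
              · rfl
            rw [vm, v1] at h; exact absurd h (by decide)
    · -- no square of length i₁
      have hx : x = 1 := by omega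
      subst hx
      have h := hH (i₁ - 1) (by omega)
      rw [show 1 + (i₁ - 1) + i₁ = 2 * i₁ by omega,
          show 1 + (i₁ - 1) = i₁ by omega] at h
      rw [vi1, v2i1] at h; exact absurd h (by decide)
  · -- invariance with i₁
    intro t h1 ht
    by_cases hd : 2 * i₂ ∣ t
    · have v1 : wA i₂ i₁ t = 1 := by
        simp only [wA]; split_ifs with hc
        · rfl
        · exact absurd (Or.inl ⟨hd, by omega⟩) hc
      have v2 : wA i₂ i₁ (t + i₁) = 1 := by
        simp only [wA]; split_ifs with hc
        · rfl
        · refine absurd (Or.inr (Or.inr ⟨by omega, by omega, ?_⟩)) hc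
          rwa [show t + i₁ - i₁ = t by omega]
      rw [v1, v2]
    · have v1 : wA i₂ i₁ t = 0 := by
        simp only [wA]; split_ifs with hc
        · exfalso; rcases hc with ⟨h5, _⟩ | h5 | ⟨h5, _, _⟩
          · exact hd h5
          · omega
          · omega
        · rfl
      have v2 : wA i₂ i₁ (t + i₁) = 0 := by
        simp only [wA]; split_ifs with hc
        · exfalso; rcases hc with ⟨_, h5⟩ | h5 | ⟨_, _, h5⟩
          · omega
          · omega
          · rw [show t + i₁ - i₁ = t by omega] at h5; exact hd h5
        · rfl
      rw [v1, v2]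
  · -- invariance with i₂
    intro t h1 ht
    have v1 : wA i₂ i₁ t = 0 := by
      simp only [wA]; split_ifs with hc
      · exfalso; rcases hc with ⟨h5, _⟩ | h5 | ⟨h5, _, _⟩
        · have := Nat.le_of_dvd (by omega) h5; omega
        · omega
        · omega
      · rfl
    have v2 : wA i₂ i₁ (t + i₂) = 0 := by
      simp only [wA]; split_ifs with hc
      · exfalso; rcases hc with ⟨h5, _⟩ | h5 | ⟨h5, _, _⟩
        · have := Nat.le_of_dvd (by omega) h5; omega
        · omega
        · omega
      · rfl
    rw [v1, v2]
  · rw [vi1, vi2]; decide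
  · rw [vi1, v2i1]; decide
  · rw [vi2, v2i2]; decide

/-- word for case `2 i₂ < i₁`, `i₂ ∣ i₁`. -/
def wC (i₂ i₁ t : ℕ) : Fin 2 :=
  if (2 * i₂ ∣ t ∧ t ≤ i₁) ∨ t = i₁ - 1 ∨ t = i₁ ∨
     (i₁ < t ∧ t < 2 * i₁ ∧ 2 * i₂ ∣ (t - i₁)) ∨ t = 2 * i₁ - 1
  then 1 else 0

lemma caseC (i₂ i₁ : ℕ) (h2 : 2 ≤ i₂) (hlt : i₂ < i₁) (hA : 2 * i₂ < i₁)
    (hdv : i₂ ∣ i₁) : deProp i₂ i₁ := by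
  have h22 : i₂ ∣ 2 * i₂ := ⟨2, by ring⟩
  have h3 : 3 * i₂ ≤ i₁ := by
    obtain ⟨k, hk⟩ := hdv
    have hk3 : 3 ≤ k := by
      by_contra hcon
      push_neg at hcon
      interval_cases k <;> omega
    have := Nat.mul_le_mul_left i₂ hk3
    omega
  have hnd1 : ¬ i₂ ∣ (i₁ - 1) := by
    intro hcon
    have h5 := Nat.dvd_sub hdv hcon
    rw [show i₁ - (i₁ - 1) = 1 by omega] at h5
    have := Nat.le_of_dvd one_pos h5; omega
  have vi1 : wC i₂ i₁ i₁ = 1 := by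
    simp only [wC]; split_ifs with hc
    · rfl
    · exact absurd (by tauto) hc
  have v2i1 : wC i₂ i₁ (2 * i₁) = 0 := by
    simp only [wC]; split_ifs with hc
    · exfalso; rcases hc with ⟨_, h5⟩ | h5 | h5 | ⟨_, h5, _⟩ | h5 <;> omega
    · rfl
  have vi2 : wC i₂ i₁ i₂ = 0 := by
    simp only [wC]; split_ifs with hc
    · exfalso
      rcases hc with ⟨h5, _⟩ | h5 | h5 | ⟨h5, _, _⟩ | h5
      · have := Nat.le_of_dvd (by omega) h5; omega
      all_goals omega
    · rfl
  have v2i2 : wC i₂ i₁ (2 * i₂) = 1 := by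
    simp only [wC]; split_ifs with hc
    · rfl
    · exact absurd (Or.inl ⟨dvd_refl _, by omega⟩) hc
  refine ⟨wC i₂ i₁, ?_, ?_, ?_, ?_, ?_, ?_⟩
  · rintro ⟨i, hi, x, hx1, hx2, hH⟩
    simp only [Set.mem_insert_iff, Set.mem_singleton_iff] at hi
    rcases hi with hi | hi <;> subst i
    · -- no square of length i₂
      by_cases hR1 : x + 2 * i₂ ≤ i₁
      · -- window inside [1, i₁ - 1]
        obtain ⟨q, hq1, hq2⟩ := exists_mult (2 * i₂) x (by omega)
        set m := 2 * i₂ * q with hm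
        have hdm : 2 * i₂ ∣ m := dvd_mul_right _ _
        have hdm2 : i₂ ∣ m := dvd_trans h22 hdm
        have vm : wC i₂ i₁ m = 1 := by
          simp only [wC]; split_ifs with hc
          · rfl
          · exact absurd (Or.inl ⟨hdm, by omega⟩) hc
        by_cases hsplit : x + i₂ ≤ m
        · have h := hH (m - i₂ - x) (by omega)
          rw [show x + (m - i₂ - x) + i₂ = m by omega,
              show x + (m - i₂ - x) = m - i₂ by omega] at h
          have v1 : wC i₂ i₁ (m - i₂) = 0 := by
            simp only [wC]; split_ifs with hc
            · exfalso
              rcases hc with ⟨hd, _⟩ | h5 | h5 | ⟨h5, _, _⟩ | h5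
              · have h5 := Nat.dvd_sub hdm hd
                rw [show m - (m - i₂) = i₂ by omega] at h5
                have := Nat.le_of_dvd (by omega) h5; omega
              · refine hnd1 ?_
                rw [← h5]
                exact Nat.dvd_sub hdm2 (dvd_refl i₂)
              all_goals omega
            · rfl
          rw [v1, vm] at h; exact absurd h (by decide)
        · have h := hH (m - x) (by omega)
          rw [show x + (m - x) + i₂ = m + i₂ by omega,
              show x + (m - x) = m by omega] at h
          have v1 : wC i₂ i₁ (m + i₂) = 0 := by
            simp only [wC]; split_ifs with hc
            · exfalso
              rcases hc with ⟨hd, _⟩ | h5 | h5 | ⟨h5, _, _⟩ | h5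
              · have h5 := Nat.dvd_sub hd hdm
                rw [show m + i₂ - m = i₂ by omega] at h5
                have := Nat.le_of_dvd (by omega) h5; omega
              · refine hnd1 ?_
                rw [← h5]
                exact dvd_add hdm2 (dvd_refl i₂)
              all_goals omega
            · rfl
          rw [vm, v1] at h; exact absurd h (by decide)
      · by_cases hS : x < i₁
        · -- window straddles, contains i₁ - 1; pivot at i₁ - 1
          have vp : wC i₂ i₁ (i₁ - 1) = 1 := by
            simp only [wC]; split_ifs with hc
            · rfl
            · exact absurd (by tauto) hc
          by_cases hsplit : i₁ ≤ x + i₂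
          · have h := hH (i₁ - 1 - x) (by omega)
            rw [show x + (i₁ - 1 - x) + i₂ = i₁ + i₂ - 1 by omega,
                show x + (i₁ - 1 - x) = i₁ - 1 by omega] at h
            have v1 : wC i₂ i₁ (i₁ + i₂ - 1) = 0 := by
              simp only [wC]; split_ifs with hc
              · exfalso
                rcases hc with ⟨_, h5⟩ | h5 | h5 | ⟨_, _, hd⟩ | h5
                · omega
                · omega
                · omega
                · rw [show i₁ + i₂ - 1 - i₁ = i₂ - 1 by omega] at hd
                  have := Nat.le_of_dvd (by omega) hd; omega
                · omega
              · rfl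
            rw [vp, v1] at h; exact absurd h (by decide)
          · have h := hH (i₁ - 1 - i₂ - x) (by omega)
            rw [show x + (i₁ - 1 - i₂ - x) + i₂ = i₁ - 1 by omega,
                show x + (i₁ - 1 - i₂ - x) = i₁ - 1 - i₂ by omega] at h
            have v1 : wC i₂ i₁ (i₁ - 1 - i₂) = 0 := by
              simp only [wC]; split_ifs with hc
              · exfalso
                rcases hc with ⟨hd, _⟩ | h5 | h5 | ⟨h5, _, _⟩ | h5
                · refine hnd1 ?_
                  have h5 : i₂ ∣ i₁ - 1 - i₂ := dvd_trans h22 hd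
                  have h6 := Nat.dvd_add h5 (dvd_refl i₂)
                  rwa [show i₁ - 1 - i₂ + i₂ = i₁ - 1 by omega] at h6
                all_goals omega
              · rfl
            rw [v1, vp] at h; exact absurd h (by decide)
        · -- window inside the second block (x ≥ i₁)
          push_neg at hS
          obtain ⟨q, hq1, hq2⟩ := exists_mult (2 * i₂) (x - i₁) (by omega)
          set M := 2 * i₂ * q with hM
          have hdM : 2 * i₂ ∣ M := dvd_mul_right _ _
          have hdM2 : i₂ ∣ M := dvd_trans h22 hdM
          by_cases hm2 : i₁ + M = 2 * i₁
          · -- window is the final one [2i₁-2i₂+1, 2i₁]; pivot at 2i₁ - 1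
            have hxx : x = 2 * i₁ - 2 * i₂ + 1 := by omega
            have h := hH (2 * i₁ - 1 - i₂ - x) (by omega)
            rw [show x + (2 * i₁ - 1 - i₂ - x) + i₂ = 2 * i₁ - 1 by omega,
                show x + (2 * i₁ - 1 - i₂ - x) = 2 * i₁ - 1 - i₂ by omega] at h
            have v2 : wC i₂ i₁ (2 * i₁ - 1) = 1 := by
              simp only [wC]; split_ifs with hc
              · rfl
              · exact absurd (by tauto) hc
            have v1 : wC i₂ i₁ (2 * i₁ - 1 - i₂) = 0 := by
              simp only [wC]; split_ifs with hc
              · exfalso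
                rcases hc with ⟨_, h5⟩ | h5 | h5 | ⟨_, _, hd⟩ | h5
                · omega
                · omega
                · omega
                · rw [show 2 * i₁ - 1 - i₂ - i₁ = i₁ - 1 - i₂ by omega] at hd
                  refine hnd1 ?_
                  have h5 : i₂ ∣ i₁ - 1 - i₂ := dvd_trans h22 hd
                  have h6 := Nat.dvd_add h5 (dvd_refl i₂)
                  rwa [show i₁ - 1 - i₂ + i₂ = i₁ - 1 by omega] at h6
                · omega
              · rfl
            rw [v1, v2] at h; exact absurd h (by decide)
          · by_cases hzero : M = 0
            · -- x = i₁ exactly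
              have hxx : x = i₁ := by omega
              have h := hH 0 (by omega)
              rw [show x + 0 + i₂ = i₁ + i₂ by omega,
                  show x + 0 = i₁ by omega] at h
              have v1 : wC i₂ i₁ (i₁ + i₂) = 0 := by
                simp only [wC]; split_ifs with hc
                · exfalso
                  rcases hc with ⟨_, h5⟩ | h5 | h5 | ⟨_, _, hd⟩ | h5
                  · omega
                  · omega
                  · omega
                  · rw [show i₁ + i₂ - i₁ = i₂ by omega] at hd
                    have := Nat.le_of_dvd (by omega) hd; omega
                  · omega
                · rfl
              rw [vi1, v1] at h; exact absurd h (by decide)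
            · have hM2 : 2 * i₂ ≤ M := Nat.le_of_dvd (by omega) hdM
              have vm : wC i₂ i₁ (i₁ + M) = 1 := by
                simp only [wC]; split_ifs with hc
                · rfl
                · refine absurd (Or.inr (Or.inr (Or.inr (Or.inl
                    ⟨by omega, by omega, ?_⟩)))) hc
                  rw [show i₁ + M - i₁ = M by omega]; exact hdM
              by_cases hsplit : x + i₂ ≤ i₁ + M
              · have h := hH (i₁ + M - i₂ - x) (by omega)
                rw [show x + (i₁ + M - i₂ - x) + i₂ = i₁ + M by omega,
                    show x + (i₁ + M - i₂ - x) = i₁ + M - i₂ by omega] at h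
                have v1 : wC i₂ i₁ (i₁ + M - i₂) = 0 := by
                  simp only [wC]; split_ifs with hc
                  · exfalso
                    rcases hc with ⟨_, h5⟩ | h5 | h5 | ⟨_, _, hd⟩ | h5
                    · omega
                    · omega
                    · omega
                    · rw [show i₁ + M - i₂ - i₁ = M - i₂ by omega] at hd
                      have h5 := Nat.dvd_sub hdM hd
                      rw [show M - (M - i₂) = i₂ by omega] at h5
                      have := Nat.le_of_dvd (by omega) h5; omega
                    · omega
                  · rfl
                rw [v1, vm] at h; exact absurd h (by decide)
              · have h := hH (i₁ + M - x) (by omega)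
                rw [show x + (i₁ + M - x) + i₂ = i₁ + M + i₂ by omega,
                    show x + (i₁ + M - x) = i₁ + M by omega] at h
                have v1 : wC i₂ i₁ (i₁ + M + i₂) = 0 := by
                  simp only [wC]; split_ifs with hc
                  · exfalso
                    rcases hc with ⟨_, h5⟩ | h5 | h5 | ⟨_, _, hd⟩ | h5
                    · omega
                    · omega
                    · omega
                    · rw [show i₁ + M + i₂ - i₁ = M + i₂ by omega] at hd
                      have h5 := Nat.dvd_sub hd hdM
                      rw [show M + i₂ - M = i₂ by omega] at h5
                      have := Nat.le_of_dvd (by omega) h5; omega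
                    · -- i₁ + M + i₂ = 2i₁ - 1 gives i₂ ∣ i₁ - 1
                      refine hnd1 ?_
                      have h6 : i₂ ∣ M + i₂ := dvd_add hdM2 (dvd_refl i₂)
                      rwa [show M + i₂ = i₁ - 1 by omega] at h6
                  · rfl
                rw [vm, v1] at h; exact absurd h (by decide)
    · -- no square of length i₁
      have hx : x = 1 := by omega
      subst hx
      have h := hH (i₁ - 1) (by omega)
      rw [show 1 + (i₁ - 1) + i₁ = 2 * i₁ by omega,
          show 1 + (i₁ - 1) = i₁ by omega] at h
      rw [vi1, v2i1] at h; exact absurd h (by decide)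
  · -- invariance with i₁
    intro t h1 ht
    by_cases hd : 2 * i₂ ∣ t
    · have v1 : wC i₂ i₁ t = 1 := by
        simp only [wC]; split_ifs with hc
        · rfl
        · exact absurd (Or.inl ⟨hd, by omega⟩) hc
      have v2 : wC i₂ i₁ (t + i₁) = 1 := by
        simp only [wC]; split_ifs with hc
        · rfl
        · refine absurd (Or.inr (Or.inr (Or.inr (Or.inl ⟨by omega, by omega, ?_⟩)))) hc
          rwa [show t + i₁ - i₁ = t by omega]
      rw [v1, v2]
    · by_cases he : t = i₁ - 1
      · have v1 : wC i₂ i₁ t = 1 := by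
          simp only [wC]; split_ifs with hc
          · rfl
          · exact absurd (Or.inr (Or.inl he)) hc
        have v2 : wC i₂ i₁ (t + i₁) = 1 := by
          simp only [wC]; split_ifs with hc
          · rfl
          · exact absurd (Or.inr (Or.inr (Or.inr (Or.inr (by omega))))) hc
        rw [v1, v2]
      · have v1 : wC i₂ i₁ t = 0 := by
          simp only [wC]; split_ifs with hc
          · exfalso; rcases hc with ⟨h5, _⟩ | h5 | h5 | ⟨h5, _, _⟩ | h5
            · exact hd h5
            all_goals omega
          · rfl
        have v2 : wC i₂ i₁ (t + i₁) = 0 := by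
          simp only [wC]; split_ifs with hc
          · exfalso; rcases hc with ⟨_, h5⟩ | h5 | h5 | ⟨_, _, h5⟩ | h5
            · omega
            · omega
            · omega
            · rw [show t + i₁ - i₁ = t by omega] at h5; exact hd h5
            · omega
          · rfl
        rw [v1, v2]
  · -- invariance with i₂
    intro t h1 ht
    have v1 : wC i₂ i₁ t = 0 := by
      simp only [wC]; split_ifs with hc
      · exfalso; rcases hc with ⟨h5, _⟩ | h5 | h5 | ⟨h5, _, _⟩ | h5
        · have := Nat.le_of_dvd (by omega) h5; omega
        all_goals omega
      · rfl
    have v2 : wC i₂ i₁ (t + i₂) = 0 := by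
      simp only [wC]; split_ifs with hc
      · exfalso; rcases hc with ⟨h5, _⟩ | h5 | h5 | ⟨h5, _, _⟩ | h5
        · have := Nat.le_of_dvd (by omega) h5; omega
        all_goals omega
      · rfl
    rw [v1, v2]
  · rw [vi1, vi2]; decide
  · rw [vi1, v2i1]; decide
  · rw [vi2, v2i2]; decide

/-- If `2 ≤ i₂ < i₁` and `2 * i₂ ≠ i₁`, there is a word of length `2 * i₁`
over a two-letter alphabet which is `{i₂, i₁}`-squarefree, satisfies the
invariance conditions, and satisfies the primary difference conditions
`w i₁ ≠ w i₂`, `w i₁ ≠ w (2 i₁)`, `w i₂ ≠ w (2 i₂)`.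
(So `minA(i₂, i₁) = 2` in this case.) -/
theorem two_letters_suffice_of_not_doubling (i₂ i₁ : ℕ) (h2 : 2 ≤ i₂)
    (hlt : i₂ < i₁) (hnd : 2 * i₂ ≠ i₁) :
    ∃ w : ℕ → Fin 2,
      (¬ ∃ i ∈ ({i₂, i₁} : Set ℕ), ∃ x, 1 ≤ x ∧ x + 2 * i - 1 ≤ 2 * i₁ ∧
        ∀ t < i, w (x + t) = w (x + t + i)) ∧
      (∀ t, 1 ≤ t → t < i₁ → w t = w (t + i₁)) ∧
      (∀ t, 1 ≤ t → t < i₂ → w t = w (t + i₂)) ∧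
      w i₁ ≠ w i₂ ∧ w i₁ ≠ w (2 * i₁) ∧ w i₂ ≠ w (2 * i₂) := by
  rcases lt_or_gt_of_ne hnd with hgt | hB
  · by_cases hdv : i₂ ∣ i₁
    · exact caseC i₂ i₁ h2 hlt hgt hdv
    · exact caseA i₂ i₁ h2 hlt hgt hdv
  · exact caseB i₂ i₁ h2 hlt hB
end

section
/- Let i₁ > 1. Any word w of length 2i₁ over a two-letter alphabet satisfying w_t = w_{t+i₁} for all 0 < t < i₁ contains a square vv with |v| ∈ {1, i₁}. Moreover, over a three-letter alphabet there exists such a word with no square vv with |v| ∈ {1, i₁}. -/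
/-!
A binary word without a 1-square alternates, so `w 1 = w (1 + i₁)` forces `i₁` to be even, and
an alternating word of length `2 * i₁` with `i₁` even is an `i₁`-square. Over three
letters, `1 0 1 0 ⋯ 2 1 0 1 0 ⋯` (the letter `2` at position `i₁`) has no two equal
neighbours, and its only candidate `i₁`-square, at position 1, fails since
`w i₁ = 2 ≠ w (2 * i₁)`.
-/

/-- `w 1 ⋯ w n` contains a square `v v` with `|v| = i`. -/
def HasSquare {α : Type*} (w : ℕ → α) (n i : ℕ) : Prop :=
  ∃ x, 1 ≤ x ∧ x + 2 * i - 1 ≤ n ∧ ∀ t < i, w (x + t) = w (x + t + i)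

section HasSquare

variable {α : Type*} {w : ℕ → α}

theorem hasSquare_one_iff {n : ℕ} :
    HasSquare w n 1 ↔ ∃ x, 1 ≤ x ∧ x + 1 ≤ n ∧ w x = w (x + 1) := by
  simp [HasSquare]

theorem hasSquare_two_mul_self_iff {i : ℕ} (hi : 0 < i) :
    HasSquare w (2 * i) i ↔ ∀ t < i, w (1 + t) = w (1 + t + i) := by
  constructor
  · rintro ⟨x, hx, hxn, h⟩
    obtain rfl : x = 1 := by omega
    exact h
  · exact fun h => ⟨1, le_rfl, by omega, h⟩

theorem not_hasSquare_two_mul_self_of_ne {i : ℕ} (hi : 0 < i) (h : w i ≠ w (2 * i)) :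
    ¬HasSquare w (2 * i) i := by
  rw [hasSquare_two_mul_self_iff hi]
  intro hsq
  have := hsq (i - 1) (by omega)
  rw [show 1 + (i - 1) = i by omega, ← two_mul] at this
  exact h this

end HasSquare

open Fin.NatCast in
theorem Fin.two_apply_add_eq_of_ne_succ {w : ℕ → Fin 2} {a b : ℕ}
    (h : ∀ x, a ≤ x → x + 1 ≤ b → w x ≠ w (x + 1)) :
    ∀ k, a + k ≤ b → w (a + k) = w a + k := by
  have flip : ∀ c d : Fin 2, c ≠ d → d = c + 1 := by decide
  intro k
  induction k with
  | zero => simp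
  | succ k ih =>
    intro hk
    rw [← add_assoc, flip _ _ (h (a + k) (by omega) hk), ih (by omega), Nat.cast_succ, add_assoc]

open Fin.NatCast in
theorem hasSquare_one_or_hasSquare_two_mul_self {w : ℕ → Fin 2} {i : ℕ} (hi : 1 < i)
    (hw : ∀ t, 1 ≤ t → t < i → w t = w (t + i)) :
    HasSquare w (2 * i) 1 ∨ HasSquare w (2 * i) i := by
  rw [or_iff_not_imp_left, hasSquare_one_iff, hasSquare_two_mul_self_iff (by omega)]
  push Not
  intro hne
  have halt := Fin.two_apply_add_eq_of_ne_succ hne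
  have hieven : (i : Fin 2) = 0 := by
    have := hw 1 le_rfl hi
    rwa [halt i (by omega), left_eq_add] at this
  intro t ht
  rw [add_assoc, halt t (by omega), halt (t + i) (by omega), Nat.cast_add, hieven, add_zero]

def parityLetter (n : ℕ) : Fin 3 := ⟨n % 2, by omega⟩

def squareFreeWitness (i x : ℕ) : Fin 3 :=
  if x < i then parityLetter x else if x = i then 2 else parityLetter (x - i)

section squareFreeWitness

variable (i : ℕ)

theorem squareFreeWitness_add_self (t : ℕ) (ht : 1 ≤ t) (hti : t < i) :
    squareFreeWitness i t = squareFreeWitness i (t + i) := by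
  simp only [squareFreeWitness, if_pos hti, if_neg (show ¬t + i < i by omega),
    if_neg (show t + i ≠ i by omega), Nat.add_sub_cancel]

theorem squareFreeWitness_succ_ne (x : ℕ) :
    squareFreeWitness i x ≠ squareFreeWitness i (x + 1) := by
  unfold squareFreeWitness parityLetter
  split_ifs <;> simp only [ne_eq, Fin.ext_iff, Fin.val_two] <;> omega

theorem not_hasSquare_one_squareFreeWitness (n : ℕ) :
    ¬HasSquare (squareFreeWitness i) n 1 := by
  rw [hasSquare_one_iff]
  rintro ⟨x, -, -, h⟩
  exact squareFreeWitness_succ_ne i x h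

theorem not_hasSquare_two_mul_self_squareFreeWitness (hi : 0 < i) :
    ¬HasSquare (squareFreeWitness i) (2 * i) i := by
  refine not_hasSquare_two_mul_self_of_ne hi ?_
  simp only [squareFreeWitness, parityLetter, lt_irrefl, if_false, if_true,
    if_neg (show ¬2 * i < i by omega), if_neg (show 2 * i ≠ i by omega), ne_eq, Fin.ext_iff,
    Fin.val_two]
  omega

end squareFreeWitness

/-- `minA(1, i₁) = 3`: every word of length `2 * i₁` over a two-letter alphabet
satisfying the invariance `w t = w (t + i₁)` for `0 < t < i₁` contains a square
`v ++ v` with `|v| ∈ {1, i₁}`, while over a three-letter alphabet such a word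
without squares of these half-lengths exists. -/
theorem minA_one_i_eq_three (i₁ : ℕ) (hi : 1 < i₁) :
    (∀ w : ℕ → Fin 2, (∀ t, 1 ≤ t → t < i₁ → w t = w (t + i₁)) →
      ∃ i ∈ ({1, i₁} : Set ℕ), ∃ x, 1 ≤ x ∧ x + 2 * i - 1 ≤ 2 * i₁ ∧
        ∀ t < i, w (x + t) = w (x + t + i)) ∧
    (∃ w : ℕ → Fin 3, (∀ t, 1 ≤ t → t < i₁ → w t = w (t + i₁)) ∧
      ¬ ∃ i ∈ ({1, i₁} : Set ℕ), ∃ x, 1 ≤ x ∧ x + 2 * i - 1 ≤ 2 * i₁ ∧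
        ∀ t < i, w (x + t) = w (x + t + i)) := by
  refine ⟨fun w hw => ?_, squareFreeWitness i₁, squareFreeWitness_add_self i₁, ?_⟩
  · rcases hasSquare_one_or_hasSquare_two_mul_self hi hw with h | h
    exacts [⟨1, .inl rfl, h⟩, ⟨i₁, .inr rfl, h⟩]
  · rintro ⟨i, rfl | rfl, h⟩
    exacts [not_hasSquare_one_squareFreeWitness _ _ h,
      not_hasSquare_two_mul_self_squareFreeWitness _ (by omega) h]
end

section
/- Let s = (i_r < i_{r−1} < ⋯ < i₁) with r = 2: the directed graph G(s) on (i₂,i₁)-squarefree words of length 2i₁ over alphabet A has no dead-ends if and only if |A| ≥ 3, or 2i₂ = i₁, or i₂ = 1. -/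
section DeadEndAux
variable {A : Type*}


/-- build a square from index equalities -/
lemma sq_of_idx {w : List A} {i q : ℕ} (h : q + 2*i ≤ w.length)
    (he : ∀ j, j < i → w[q+j]? = w[q+i+j]?) :
    ∃ v : List A, v.length = i ∧ (v ++ v) <:+: w := by
  set v := (w.drop q).take i with hv
  have hlen : v.length = i := by simp [hv]; omega
  refine ⟨v, hlen, ?_⟩
  have hvn : ∀ n, n < i → v[n]? = w[q+n]? := by
    intro n hn
    rw [hv, List.getElem?_take_of_lt hn, List.getElem?_drop]
  have h2 : v ++ v = (w.drop q).take (2*i) := by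
    apply List.ext_getElem?
    intro n
    rcases lt_or_ge n (2*i) with hn | hn
    · have hrhs : ((w.drop q).take (2*i))[n]? = w[q+n]? := by
        rw [List.getElem?_take_of_lt hn, List.getElem?_drop]
      rw [hrhs]
      rcases lt_or_ge n i with hni | hni
      · rw [List.getElem?_append_left (by omega), hvn n hni]
      · rw [List.getElem?_append_right (by omega), hlen, hvn (n - i) (by omega)]
        have := he (n - i) (by omega)
        have e : q + i + (n - i) = q + n := by omega
        rw [e] at this
        exact this
    · rw [List.getElem?_eq_none (by simp; omega), List.getElem?_eq_none (by simp; omega)]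
  refine ⟨w.take q, w.drop (q + 2*i), ?_⟩
  rw [h2]
  have h4 : w.drop (q + 2*i) = (w.drop q).drop (2*i) := by
    rw [List.drop_drop]
  rw [List.append_assoc, h4, List.take_append_drop, List.take_append_drop]

/-- destructure a square into index equalities -/
lemma idx_of_sq {w : List A} {i : ℕ} {v : List A} (hvl : v.length = i)
    (hinf : (v ++ v) <:+: w) :
    ∃ q, q + 2*i ≤ w.length ∧ ∀ j, j < i → w[q+j]? = w[q+i+j]? := by
  obtain ⟨s, t, hst⟩ := hinf
  refine ⟨s.length, ?_, ?_⟩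
  · have := congrArg List.length hst
    simp at this
    omega
  · intro j hj
    have h1 : w[s.length + j]? = v[j]? := by
      rw [← hst, List.append_assoc, List.getElem?_append_right (by omega),
          Nat.add_sub_cancel_left, List.getElem?_append_left (by simp; omega),
          List.getElem?_append_left (by omega)]
    have h2 : w[s.length + i + j]? = v[j]? := by
      rw [← hst, List.append_assoc, List.getElem?_append_right (by omega)]
      have e : s.length + i + j - s.length = i + j := by omega
      rw [e, List.getElem?_append_left (by simp; omega),
          List.getElem?_append_right (by omega)]
      congr 1
      omega
    rw [h1, h2]



lemma dvd_bounds {m x : ℕ} (h : m ∣ x) : x = 0 ∨ x = m ∨ 2*m ≤ x := by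
  obtain ⟨c, rfl⟩ := h
  rcases c with _ | _ | c
  · left; simp
  · right; left; simp
  · right; right
    have : m * 2 ≤ m * (c + 1 + 1) := Nat.mul_le_mul_left m (by omega)
    omega

lemma mod_forces {m a b : ℕ} (h : a % m = b % m) (hab : a ≤ b) (hlt : b < a + m) : a = b := by
  have hd : m ∣ b - a := (Nat.modEq_iff_dvd' hab).mp h
  rcases dvd_bounds hd with h1 | h1 | h1 <;> omega

lemma mod_key (i₂ : ℕ) (hi : 0 < i₂) (x : ℕ) : x % (2*i₂) = i₂ * (x / i₂ % 2) + x % i₂ := by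
  have h1 : x % (i₂ * 2) / i₂ = x / i₂ % 2 := Nat.mod_mul_right_div_self x i₂ 2
  have h2 : x % (i₂ * 2) % i₂ = x % i₂ := Nat.mod_mul_right_mod x i₂ 2
  have h3 := Nat.div_add_mod (x % (i₂ * 2)) i₂
  rw [h1, h2] at h3
  rw [Nat.mul_comm 2 i₂]
  omega

lemma mod_split {i₂ a b : ℕ} (hi : 0 < i₂) (h : a % i₂ = b % i₂) :
    a % (2*i₂) = b % (2*i₂) ∨ (a + i₂) % (2*i₂) = b % (2*i₂) := by
  have e1 := mod_key i₂ hi a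
  have e2 := mod_key i₂ hi b
  have e3 := mod_key i₂ hi (a + i₂)
  have hd : (a + i₂) / i₂ = a / i₂ + 1 := Nat.add_div_right a hi
  have hm : (a + i₂) % i₂ = a % i₂ := Nat.add_mod_right a i₂
  rw [hd, hm] at e3
  rcases Nat.mod_two_eq_zero_or_one (a / i₂) with ha | ha <;>
    rcases Nat.mod_two_eq_zero_or_one (b / i₂) with hb | hb <;>
      rw [ha] at e1 <;> rw [hb] at e2 <;>
      [skip; skip; skip; skip] <;>
      (try rw [(by omega : (a / i₂ + 1) % 2 = 1)] at e3) <;>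
      (try rw [(by omega : (a / i₂ + 1) % 2 = 0)] at e3) <;>
      simp only [Nat.mul_zero, Nat.mul_one] at e1 e2 e3 <;> omega

lemma exists_probe {i₂ : ℕ} (hi : 0 < i₂) (q c : ℕ) :
    ∃ j, j < i₂ ∧ (q + j) % i₂ = c % i₂ := by
  have hq : q % i₂ < i₂ := Nat.mod_lt q hi
  have hc : c % i₂ < i₂ := Nat.mod_lt c hi
  refine ⟨if q % i₂ ≤ c % i₂ then c % i₂ - q % i₂ else c % i₂ + i₂ - q % i₂, ?_, ?_⟩
  · split_ifs <;> omega
  · have hsplit := Nat.div_add_mod q i₂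
    set j := if q % i₂ ≤ c % i₂ then c % i₂ - q % i₂ else c % i₂ + i₂ - q % i₂ with hj
    have e : q + j = i₂ * (q / i₂) + (q % i₂ + j) := by omega
    rw [e, Nat.mul_add_mod]
    rcases le_or_gt (q % i₂) (c % i₂) with hle | hlt
    · have hqj : q % i₂ + j = c % i₂ := by rw [hj]; split_ifs <;> omega
      rw [hqj, Nat.mod_eq_of_lt hc]
    · have hqj : q % i₂ + j = c % i₂ + i₂ := by rw [hj]; split_ifs <;> omega
      rw [hqj, Nat.add_mod_right, Nat.mod_eq_of_lt hc]




lemma ite_inj {P R : Prop} [Decidable P] [Decidable R] {x y : A} (hxy : x ≠ y)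
    (h : (if P then y else x) = (if R then y else x)) : P ↔ R := by
  split_ifs at h <;> tauto

lemma ite_congr_iff {P R : Prop} [Decidable P] [Decidable R] (x y : A) (h : P ↔ R) :
    (if P then y else x) = (if R then y else x) := by
  split_ifs <;> tauto

theorem deadend_exists {x y : A} (hxy : x ≠ y) (i₂ i₁ : ℕ)
    (h1 : 1 ≤ i₂) (hlt : i₂ < i₁) (Q : ℕ → Prop) [DecidablePred Q]
    (O1 : ¬ Q 0) (O2 : Q i₁)
    (O3 : ∀ p, 1 ≤ p → p + 1 ≤ i₁ → (Q p ↔ Q (p + i₁)))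
    (O4 : ∀ p, 2*i₁ + 1 ≤ p + 2*i₂ → p + i₂ + 1 ≤ 2*i₁ → (Q p ↔ Q (p + i₂)))
    (O5 : ¬ Q (2*i₁ - i₂))
    (O6 : ∀ q, q + 2*i₂ ≤ 2*i₁ → ¬ ∀ j, j < i₂ → (Q (q+j) ↔ Q (q+i₂+j))) :
    ∃ w : List A, w.length = 2*i₁ ∧
      (∀ i ∈ ({i₂, i₁} : Set ℕ), ¬ ∃ v : List A, v.length = i ∧ (v ++ v) <:+: w) ∧
      (∀ a : A, a = x ∨ a = y →
        ∃ i ∈ ({i₂, i₁} : Set ℕ), ∃ v : List A, v.length = i ∧ (v ++ v) <:+: (w ++ [a])) := by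
  set w : List A := (List.range (2*i₁)).map (fun p => if Q p then y else x) with hw
  have hlen : w.length = 2*i₁ := by simp [hw]
  have welem : ∀ p, p < 2*i₁ → w[p]? = some (if Q p then y else x) := by
    intro p hp
    rw [hw, List.getElem?_map]
    simp [List.getElem?_range hp]
  have happ : ∀ (a : A) (p : ℕ), p < 2*i₁ → (w ++ [a])[p]? = w[p]? := by
    intro a p hp
    exact List.getElem?_append_left (by omega)
  have happN : ∀ a : A, (w ++ [a])[2*i₁]? = some a := by
    intro a
    rw [List.getElem?_append_right (by omega)]
    simp [hlen]
  refine ⟨w, hlen, ?_, ?_⟩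
  · intro i hi ⟨v, hvl, hinf⟩
    obtain ⟨q, hq, he⟩ := idx_of_sq hvl hinf
    rw [hlen] at hq
    have hiff : ∀ p r, p < 2*i₁ → r < 2*i₁ → w[p]? = w[r]? → (Q p ↔ Q r) := by
      intro p r hp hr hpr
      rw [welem p hp, welem r hr] at hpr
      exact ite_inj hxy (Option.some_inj.mp hpr)
    simp only [Set.mem_insert_iff, Set.mem_singleton_iff] at hi
    rcases hi with rfl | rfl
    · exact O6 q hq (fun j hj => hiff _ _ (by omega) (by omega) (he j hj))
    · have h0 := hiff (q+0) (q+i+0) (by omega) (by omega) (he 0 (by omega))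
      have hq0 : q = 0 := by omega
      subst hq0
      simp only [Nat.zero_add, Nat.add_zero] at h0
      exact O1 (h0.mpr O2)
  · intro a ha
    rcases ha with rfl | rfl
    · -- i₂-square at the end of w ++ [a]
      refine ⟨i₂, by simp, ?_⟩
      apply sq_of_idx (q := 2*i₁ + 1 - 2*i₂) (by simp [hlen]; omega)
      intro j hj
      have hL : 2*i₁ + 1 - 2*i₂ + j < 2*i₁ := by omega
      rw [happ _ _ hL]
      rcases lt_or_ge (2*i₁ + 1 - 2*i₂ + i₂ + j) (2*i₁) with hR | hR
      · rw [happ _ _ hR, welem _ hL, welem _ hR]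
        have e : 2*i₁ + 1 - 2*i₂ + i₂ + j = (2*i₁ + 1 - 2*i₂ + j) + i₂ := by omega
        rw [e]
        exact congrArg some (ite_congr_iff _ _ (O4 _ (by omega) (by omega)))
      · have eR : 2*i₁ + 1 - 2*i₂ + i₂ + j = 2*i₁ := by omega
        have eL : 2*i₁ + 1 - 2*i₂ + j = 2*i₁ - i₂ := by omega
        rw [eR, eL, happN, welem _ (by omega), if_neg O5]
    · -- i₁-square at position 1 of w ++ [a]
      refine ⟨i₁, by simp, ?_⟩
      apply sq_of_idx (q := 1) (by simp [hlen]; omega)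
      intro j hj
      have hL : 1 + j < 2*i₁ := by omega
      rw [happ _ _ hL]
      rcases lt_or_ge (1 + i₁ + j) (2*i₁) with hR | hR
      · rw [happ _ _ hR, welem _ hL, welem _ hR]
        have e : 1 + i₁ + j = (1 + j) + i₁ := by omega
        rw [e]
        exact congrArg some (ite_congr_iff _ _ (O3 _ (by omega) (by omega)))
      · have eR : 1 + i₁ + j = 2*i₁ := by omega
        have eL : 1 + j = i₁ := by omega
        rw [eR, eL, happN, welem _ (by omega), if_pos O2]

def QB (i₂ i₁ p : ℕ) : Prop := ¬(p = 0 ∨ p = i₁ - i₂ ∨ p = 2*i₁ - i₂)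

instance (i₂ i₁ p : ℕ) : Decidable (QB i₂ i₁ p) := by unfold QB; infer_instance

lemma B_O1 (i₂ i₁ : ℕ) : ¬ QB i₂ i₁ 0 := by unfold QB; omega

lemma B_O2 (i₂ i₁ : ℕ) (h1 : 1 ≤ i₂) (hlt : i₂ < i₁) : QB i₂ i₁ i₁ := by unfold QB; omega

lemma B_O3 (i₂ i₁ : ℕ) (h1 : 1 ≤ i₂) (hlt : i₂ < i₁) :
    ∀ p, 1 ≤ p → p + 1 ≤ i₁ → (QB i₂ i₁ p ↔ QB i₂ i₁ (p + i₁)) := by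
  intro p hp1 hp2; unfold QB; omega

lemma B_O4 (i₂ i₁ : ℕ) (h1 : 1 ≤ i₂) (hlt : i₂ < i₁) (hsm : i₁ < 2*i₂) :
    ∀ p, 2*i₁ + 1 ≤ p + 2*i₂ → p + i₂ + 1 ≤ 2*i₁ → (QB i₂ i₁ p ↔ QB i₂ i₁ (p + i₂)) := by
  intro p hp1 hp2; unfold QB; omega

lemma B_O5 (i₂ i₁ : ℕ) (h1 : 1 ≤ i₂) (hlt : i₂ < i₁) : ¬ QB i₂ i₁ (2*i₁ - i₂) := by
  unfold QB; omega

lemma B_O6 (i₂ i₁ : ℕ) (h1 : 1 ≤ i₂) (hlt : i₂ < i₁) (hsm : i₁ < 2*i₂) :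
    ∀ q, q + 2*i₂ ≤ 2*i₁ →
      ¬ ∀ j, j < i₂ → (QB i₂ i₁ (q+j) ↔ QB i₂ i₁ (q+i₂+j)) := by
  intro q hq H
  rcases le_or_gt q (i₁ - i₂) with hz | hz
  · have := H (i₁ - i₂ - q) (by omega)
    unfold QB at this
    omega
  · have := H (2*(i₁ - i₂) - q) (by omega)
    unfold QB at this
    omega


/-- agreements at distance i₂ within the same class are impossible -/
lemma himp {i₂ : ℕ} (h1 : 0 < i₂) {a c : ℕ} (hx : a % (2*i₂) = c)
    (hy : (a + i₂) % (2*i₂) = c) : False := by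
  have h : a % (2*i₂) = (a + i₂) % (2*i₂) := by rw [hx, hy]
  have hd : 2*i₂ ∣ (a + i₂) - a := (Nat.modEq_iff_dvd' (Nat.le_add_right a i₂)).mp h
  rw [Nat.add_sub_cancel_left] at hd
  have := Nat.le_of_dvd h1 hd
  omega

def QA1 (i₂ i₁ p : ℕ) : Prop :=
  (1 ≤ p ∧ p ≤ i₁ ∧ p % (2*i₂) = i₁ % (2*i₂)) ∨
  (i₁ ≤ p ∧ p + 1 ≤ 2*i₁ ∧ p % (2*i₂) = (2*i₁) % (2*i₂))

instance (i₂ i₁ p : ℕ) : Decidable (QA1 i₂ i₁ p) := by unfold QA1; infer_instance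

section A1
variable {i₂ i₁ : ℕ} (h1 : 1 ≤ i₂) (hbig : 2*i₂ < i₁) (hnd : ¬ i₂ ∣ i₁)

include h1 hbig hnd

lemma A1_O1 : ¬ QA1 i₂ i₁ 0 := by
  rintro (⟨h, -, -⟩ | ⟨h, -, -⟩) <;> omega

lemma A1_O2 : QA1 i₂ i₁ i₁ := Or.inl ⟨by omega, le_rfl, rfl⟩

lemma A1_O3 : ∀ p, 1 ≤ p → p + 1 ≤ i₁ → (QA1 i₂ i₁ p ↔ QA1 i₂ i₁ (p + i₁)) := by
  intro p hp1 hp2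
  constructor
  · rintro (⟨ha, hb, hc⟩ | ⟨ha, -, -⟩)
    · refine Or.inr ⟨by omega, by omega, ?_⟩
      have := Nat.ModEq.add_right i₁ hc
      rwa [(by ring : i₁ + i₁ = 2*i₁)] at this
    · omega
  · rintro (⟨-, hb, -⟩ | ⟨-, -, hc⟩)
    · omega
    · refine Or.inl ⟨hp1, by omega, ?_⟩
      rw [(by ring : 2*i₁ = i₁ + i₁)] at hc
      exact Nat.ModEq.add_right_cancel' i₁ hc

lemma A1_tail_none : ∀ p, 2*i₁ + 1 ≤ p + 2*i₂ → p + 1 ≤ 2*i₁ → ¬ QA1 i₂ i₁ p := by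
  rintro p hx hy (⟨-, hb, -⟩ | ⟨-, -, hc⟩)
  · omega
  · have := mod_forces hc (by omega) (by omega)
    omega

lemma A1_O4 : ∀ p, 2*i₁ + 1 ≤ p + 2*i₂ → p + i₂ + 1 ≤ 2*i₁ →
    (QA1 i₂ i₁ p ↔ QA1 i₂ i₁ (p + i₂)) :=
  fun p hx hy => iff_of_false (A1_tail_none h1 hbig hnd p (by omega) (by omega))
    (A1_tail_none h1 hbig hnd (p + i₂) (by omega) (by omega))

lemma A1_O5 : ¬ QA1 i₂ i₁ (2*i₁ - i₂) :=
  A1_tail_none h1 hbig hnd _ (by omega) (by omega)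

lemma A1_O6 : ∀ q, q + 2*i₂ ≤ 2*i₁ →
    ¬ ∀ j, j < i₂ → (QA1 i₂ i₁ (q+j) ↔ QA1 i₂ i₁ (q+i₂+j)) := by
  intro q hq H
  have hm : 0 < i₂ := h1
  have hdvd2 : ¬ (2*i₂ ∣ i₁) := fun h => hnd (dvd_trans (dvd_mul_left i₂ 2) h)
  have hzone : q + 2*i₂ ≤ i₁ + 1 ∨ (i₁ + 1 < q + 2*i₂ ∧ q + i₂ ≤ i₁) ∨
      (i₁ < q + i₂ ∧ q ≤ i₁) ∨ i₁ < q := by omega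
  rcases hzone with hz | ⟨hz1, hz2⟩ | ⟨hz1, hz2⟩ | hz
  · -- zone 1 : both halves of the window lie in [0, i₁]
    obtain ⟨j, hj, hmod⟩ := exists_probe hm q i₁
    have hH := H j hj
    rw [(by omega : q + i₂ + j = (q + j) + i₂)] at hH
    set p := q + j with hp
    have hp2 : p + i₂ ≤ i₁ := by omega
    have hp1 : 1 ≤ p := by
      rcases Nat.eq_zero_or_pos p with h0 | h0
      · exfalso
        apply hnd
        apply Nat.dvd_of_mod_eq_zero
        rw [h0] at hmod
        simpa using hmod.symm
      · exact h0
    rcases mod_split hm hmod with hc | hc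
    · have hQp : QA1 i₂ i₁ p := Or.inl ⟨hp1, by omega, hc⟩
      have hnQ : ¬ QA1 i₂ i₁ (p + i₂) := by
        rintro (⟨-, -, hcc⟩ | ⟨hge, -, hcc⟩)
        · exact himp hm hc hcc
        · have he : p + i₂ = i₁ := by omega
          rw [he] at hcc
          apply hdvd2
          have h' : i₁ % (2*i₂) = (i₁ + i₁) % (2*i₂) := by
            rw [hcc]; congr 1; ring
          have := (Nat.modEq_iff_dvd' (Nat.le_add_right i₁ i₁)).mp h'
          simpa using this
      exact hnQ (hH.mp hQp)
    · have hQp : QA1 i₂ i₁ (p + i₂) := Or.inl ⟨by omega, hp2, hc⟩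
      have hnQ : ¬ QA1 i₂ i₁ p := by
        rintro (⟨-, -, hcc⟩ | ⟨hge, -, -⟩)
        · exact himp hm hcc hc
        · omega
      exact hnQ (hH.mpr hQp)
  · -- zone 2 : pair (i₁ - i₂, i₁)
    have hH := H (i₁ - i₂ - q) (by omega)
    rw [(by omega : q + (i₁ - i₂ - q) = i₁ - i₂),
        (by omega : q + i₂ + (i₁ - i₂ - q) = i₁)] at hH
    have hnQ : ¬ QA1 i₂ i₁ (i₁ - i₂) := by
      rintro (⟨-, -, hcc⟩ | ⟨hge, -, -⟩)
      · have := mod_forces hcc (by omega) (by omega)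
        omega
      · omega
    exact hnQ (hH.mpr (A1_O2 h1 hbig hnd))
  · -- zone 3 : pair (i₁, i₁ + i₂)
    have hH := H (i₁ - q) (by omega)
    rw [(by omega : q + (i₁ - q) = i₁), (by omega : q + i₂ + (i₁ - q) = i₁ + i₂)] at hH
    have hnQ : ¬ QA1 i₂ i₁ (i₁ + i₂) := by
      rintro (⟨-, hb, -⟩ | ⟨-, -, hc⟩)
      · omega
      · rw [(by ring : 2*i₁ = i₁ + i₁)] at hc
        have h' : i₂ % (2*i₂) = i₁ % (2*i₂) :=
          Nat.ModEq.add_left_cancel' (n := 2*i₂) (a := i₂) (b := i₁) i₁ hc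
        apply hnd
        have hd : 2*i₂ ∣ i₁ - i₂ := (Nat.modEq_iff_dvd' (by omega)).mp h'
        have hd2 : i₂ ∣ i₁ - i₂ := dvd_trans (dvd_mul_left i₂ 2) hd
        have := Nat.dvd_add hd2 (dvd_refl i₂)
        rwa [Nat.sub_add_cancel (by omega)] at this
    exact hnQ (hH.mp (A1_O2 h1 hbig hnd))
  · -- zone 4 : both halves of the window lie in [i₁+1, 2 i₁ - 1]
    obtain ⟨j, hj, hmod⟩ := exists_probe hm q (2*i₁)
    have hH := H j hj
    rw [(by omega : q + i₂ + j = (q + j) + i₂)] at hH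
    set p := q + j with hp
    rcases mod_split hm hmod with hc | hc
    · have hQp : QA1 i₂ i₁ p := Or.inr ⟨by omega, by omega, hc⟩
      have hnQ : ¬ QA1 i₂ i₁ (p + i₂) := by
        rintro (⟨-, hb, -⟩ | ⟨-, -, hcc⟩)
        · omega
        · exact himp hm hc hcc
      exact hnQ (hH.mp hQp)
    · have hQp : QA1 i₂ i₁ (p + i₂) := Or.inr ⟨by omega, by omega, hc⟩
      have hnQ : ¬ QA1 i₂ i₁ p := by
        rintro (⟨-, hb, -⟩ | ⟨-, -, hcc⟩)
        · omega
        · exact himp hm hcc hc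
      exact hnQ (hH.mpr hQp)

end A1


def QA2 (i₂ i₁ p : ℕ) : Prop :=
  (1 ≤ p ∧ p + 2*i₂ + 1 ≤ i₁ ∧ p % (2*i₂) = (i₁ - 1) % (2*i₂)) ∨
  p = i₁ - 2*i₂ ∨ p = i₁ ∨
  (i₁ + 1 ≤ p ∧ p + 2*i₂ + 1 ≤ 2*i₁ ∧ p % (2*i₂) = (2*i₁ - 1) % (2*i₂)) ∨
  p = 2*i₁ - 2*i₂

instance (i₂ i₁ p : ℕ) : Decidable (QA2 i₂ i₁ p) := by unfold QA2; infer_instance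

section A2
variable {i₂ i₁ : ℕ} (h2 : 2 ≤ i₂) (hbig : 2*i₂ < i₁) (hdvd : i₂ ∣ i₁)

-- auxiliary consequences
include h2 hbig hdvd

lemma A2_three : 3*i₂ ≤ i₁ := by
  obtain ⟨k, rfl⟩ := hdvd
  have h3 : 2 < k := by
    rcases Nat.lt_or_ge 2 k with h | h
    · exact h
    · exfalso; have : i₂ * k ≤ i₂ * 2 := Nat.mul_le_mul_left i₂ h; omega
  have : i₂ * 3 ≤ i₂ * k := Nat.mul_le_mul_left i₂ h3
  omega

/-- i₂ does not divide i₁ - 1 type facts -/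
lemma A2_ndvd_pred : ¬ i₂ ∣ (i₁ - 1) := by
  intro h
  have h3 := A2_three h2 hbig hdvd
  have := Nat.dvd_sub hdvd h
  rw [(by omega : i₁ - (i₁ - 1) = 1)] at this
  have := Nat.le_of_dvd one_pos this
  omega

lemma A2_O1 : ¬ QA2 i₂ i₁ 0 := by
  have h3 := A2_three h2 hbig hdvd
  rintro (⟨h, -, -⟩ | h | h | ⟨h, -, -⟩ | h) <;> omega

lemma A2_O2 : QA2 i₂ i₁ i₁ := Or.inr (Or.inr (Or.inl rfl))

lemma A2_O3 : ∀ p, 1 ≤ p → p + 1 ≤ i₁ → (QA2 i₂ i₁ p ↔ QA2 i₂ i₁ (p + i₁)) := by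
  intro p hp1 hp2
  have h3 := A2_three h2 hbig hdvd
  constructor
  · rintro (⟨ha, hb, hc⟩ | heq | heq | ⟨ha, -, -⟩ | heq)
    · refine Or.inr (Or.inr (Or.inr (Or.inl ⟨by omega, by omega, ?_⟩)))
      have := Nat.ModEq.add_right i₁ hc
      rwa [(by omega : i₁ - 1 + i₁ = 2*i₁ - 1)] at this
    · refine Or.inr (Or.inr (Or.inr (Or.inr (by omega))))
    · omega
    · omega
    · omega
  · rintro (⟨ha, hb, -⟩ | heq | heq | ⟨ha, hb, hc⟩ | heq)
    · omega
    · omega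
    · omega
    · refine Or.inl ⟨hp1, by omega, ?_⟩
      rw [(by omega : 2*i₁ - 1 = (i₁ - 1) + i₁)] at hc
      exact Nat.ModEq.add_right_cancel' i₁ hc
    · exact Or.inr (Or.inl (by omega))

lemma A2_tail_none : ∀ p, 2*i₁ + 1 ≤ p + 2*i₂ → p + 1 ≤ 2*i₁ → ¬ QA2 i₂ i₁ p := by
  have h3 := A2_three h2 hbig hdvd
  rintro p hx hy (⟨ha, hb, -⟩ | heq | heq | ⟨ha, hb, -⟩ | heq) <;> omega

lemma A2_O4 : ∀ p, 2*i₁ + 1 ≤ p + 2*i₂ → p + i₂ + 1 ≤ 2*i₁ →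
    (QA2 i₂ i₁ p ↔ QA2 i₂ i₁ (p + i₂)) :=
  fun p hx hy => iff_of_false (A2_tail_none h2 hbig hdvd p (by omega) (by omega))
    (A2_tail_none h2 hbig hdvd (p + i₂) (by omega) (by omega))

lemma A2_O5 : ¬ QA2 i₂ i₁ (2*i₁ - i₂) :=
  A2_tail_none h2 hbig hdvd _ (by omega) (by omega)

lemma A2_O6 : ∀ q, q + 2*i₂ ≤ 2*i₁ →
    ¬ ∀ j, j < i₂ → (QA2 i₂ i₁ (q+j) ↔ QA2 i₂ i₁ (q+i₂+j)) := by
  intro q hq H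
  have hm : 0 < i₂ := by omega
  have h3 := A2_three h2 hbig hdvd
  have hnp := A2_ndvd_pred h2 hbig hdvd
  have hzone : q + 4*i₂ ≤ i₁ ∨ (i₁ < q + 4*i₂ ∧ q + 3*i₂ ≤ i₁) ∨
      (i₁ < q + 3*i₂ ∧ q + 2*i₂ + 1 ≤ i₁) ∨ q + 2*i₂ = i₁ ∨
      (i₁ < q + 2*i₂ ∧ q + i₂ ≤ i₁) ∨ (i₁ < q + i₂ ∧ q ≤ i₁) ∨
      (i₁ < q ∧ q + 2*i₂ < 2*i₁) ∨ q + 2*i₂ = 2*i₁ := by omega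
  rcases hzone with hz | ⟨hz1, hz2⟩ | ⟨hz1, hz2⟩ | hz | ⟨hz1, hz2⟩ | ⟨hz1, hz2⟩ |
    ⟨hz1, hz2⟩ | hz
  · -- Z1 : window deep inside the first block
    obtain ⟨j, hj, hmod⟩ := exists_probe hm q (i₁ - 1)
    have hH := H j hj
    rw [(by omega : q + i₂ + j = (q + j) + i₂)] at hH
    set p := q + j with hp
    have hp1 : 1 ≤ p := by
      rcases Nat.eq_zero_or_pos p with h0 | h0
      · exfalso
        apply hnp
        apply Nat.dvd_of_mod_eq_zero
        rw [h0] at hmod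
        simpa using hmod.symm
      · exact h0
    rcases mod_split hm hmod with hc | hc
    · have hQp : QA2 i₂ i₁ p := Or.inl ⟨hp1, by omega, hc⟩
      have hnQ : ¬ QA2 i₂ i₁ (p + i₂) := by
        rintro (⟨-, -, hcc⟩ | heq | heq | ⟨ha, -, -⟩ | heq)
        · exact himp hm hc hcc
        · omega
        · omega
        · omega
        · omega
      exact hnQ (hH.mp hQp)
    · have hQp : QA2 i₂ i₁ (p + i₂) := Or.inl ⟨by omega, by omega, hc⟩
      have hnQ : ¬ QA2 i₂ i₁ p := by
        rintro (⟨-, -, hcc⟩ | heq | heq | ⟨ha, -, -⟩ | heq)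
        · exact himp hm hcc hc
        · omega
        · omega
        · omega
        · omega
      exact hnQ (hH.mpr hQp)
  · -- Z2 : pair (i₁ - 3 i₂, i₁ - 2 i₂)
    have hH := H (i₁ - 3*i₂ - q) (by omega)
    rw [(by omega : q + (i₁ - 3*i₂ - q) = i₁ - 3*i₂),
        (by omega : q + i₂ + (i₁ - 3*i₂ - q) = i₁ - 2*i₂)] at hH
    have hnQ : ¬ QA2 i₂ i₁ (i₁ - 3*i₂) := by
      rintro (⟨-, -, hcc⟩ | heq | heq | ⟨ha, -, -⟩ | heq)
      · have hd : 2*i₂ ∣ (i₁ - 1) - (i₁ - 3*i₂) := (Nat.modEq_iff_dvd' (by omega)).mp hcc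
        rw [(by omega : (i₁ - 1) - (i₁ - 3*i₂) = 3*i₂ - 1)] at hd
        rcases dvd_bounds hd with h | h | h <;> omega
      · omega
      · omega
      · omega
      · omega
    exact hnQ (hH.mpr (Or.inr (Or.inl rfl)))
  · -- Z3 : pair (i₁ - 2 i₂ - 1, i₁ - i₂ - 1)
    have hH := H (i₁ - 2*i₂ - 1 - q) (by omega)
    rw [(by omega : q + (i₁ - 2*i₂ - 1 - q) = i₁ - 2*i₂ - 1),
        (by omega : q + i₂ + (i₁ - 2*i₂ - 1 - q) = i₁ - i₂ - 1)] at hH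
    have hQp : QA2 i₂ i₁ (i₁ - 2*i₂ - 1) := by
      refine Or.inl ⟨by omega, by omega, ?_⟩
      rw [(by omega : i₁ - 1 = (i₁ - 2*i₂ - 1) + 2*i₂), Nat.add_mod_right]
    have hnQ : ¬ QA2 i₂ i₁ (i₁ - i₂ - 1) := by
      rintro (⟨-, -, hcc⟩ | heq | heq | ⟨ha, -, -⟩ | heq)
      · have := mod_forces hcc (by omega) (by omega)
        omega
      · omega
      · omega
      · omega
      · omega
    exact hnQ (hH.mp hQp)
  · -- Z4a : q = i₁ - 2 i₂, pair (i₁ - 2 i₂, i₁ - i₂)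
    have hH := H 0 (by omega)
    rw [(by omega : q + 0 = i₁ - 2*i₂), (by omega : q + i₂ + 0 = i₁ - i₂)] at hH
    have hnQ : ¬ QA2 i₂ i₁ (i₁ - i₂) := by
      rintro (⟨-, hb, -⟩ | heq | heq | ⟨ha, -, -⟩ | heq) <;> omega
    exact hnQ (hH.mp (Or.inr (Or.inl rfl)))
  · -- Z4b : pair (i₁ - i₂, i₁)
    have hH := H (i₁ - i₂ - q) (by omega)
    rw [(by omega : q + (i₁ - i₂ - q) = i₁ - i₂),
        (by omega : q + i₂ + (i₁ - i₂ - q) = i₁)] at hH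
    have hnQ : ¬ QA2 i₂ i₁ (i₁ - i₂) := by
      rintro (⟨-, hb, -⟩ | heq | heq | ⟨ha, -, -⟩ | heq) <;> omega
    exact hnQ (hH.mpr (A2_O2 h2 hbig hdvd))
  · -- Z5 : q in (i₁ - i₂, i₁]
    by_cases h4 : i₁ = 3*i₂
    · subst h4
      rcases Nat.lt_or_ge q (3*i₂) with hq5 | hq5
      · -- Z5ii : pair (i₁ - 1, i₁ + i₂ - 1)
        have hH := H (3*i₂ - 1 - q) (by omega)
        rw [(by omega : q + (3*i₂ - 1 - q) = 3*i₂ - 1),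
            (by omega : q + i₂ + (3*i₂ - 1 - q) = 4*i₂ - 1)] at hH
        have hQp : QA2 i₂ (3*i₂) (4*i₂ - 1) := by
          refine Or.inr (Or.inr (Or.inr (Or.inl ⟨by omega, by omega, ?_⟩)))
          rw [(by omega : 2*(3*i₂) - 1 = (4*i₂ - 1) + 2*i₂), Nat.add_mod_right]
        have hnQ : ¬ QA2 i₂ (3*i₂) (3*i₂ - 1) := by
          rintro (⟨-, hb, -⟩ | heq | heq | ⟨ha, -, -⟩ | heq) <;> omega
        exact hnQ (hH.mpr hQp)
      · -- Z5iii : q = 3 i₂, pair (4 i₂ - 1, 5 i₂ - 1)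
        have hq6 : q = 3*i₂ := by omega
        subst hq6
        have hH := H (i₂ - 1) (by omega)
        rw [(by omega : 3*i₂ + (i₂ - 1) = 4*i₂ - 1),
            (by omega : 3*i₂ + i₂ + (i₂ - 1) = 5*i₂ - 1)] at hH
        have hQp : QA2 i₂ (3*i₂) (4*i₂ - 1) := by
          refine Or.inr (Or.inr (Or.inr (Or.inl ⟨by omega, by omega, ?_⟩)))
          rw [(by omega : 2*(3*i₂) - 1 = (4*i₂ - 1) + 2*i₂), Nat.add_mod_right]
        have hnQ : ¬ QA2 i₂ (3*i₂) (5*i₂ - 1) := by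
          rintro (⟨-, hb, -⟩ | heq | heq | ⟨-, hb, -⟩ | heq) <;> omega
        exact hnQ (hH.mp hQp)
    · -- Z5i : i₁ ≥ 4 i₂, pair (i₁, i₁ + i₂)
      have h5 : 4*i₂ ≤ i₁ := by
        obtain ⟨k, hk⟩ := hdvd
        rcases (by omega : k = 0 ∨ k = 1 ∨ k = 2 ∨ k = 3 ∨ 4 ≤ k) with h | h | h | h | h
        · subst h; simp at hk; omega
        · subst h; omega
        · subst h; omega
        · subst h; omega
        · have : i₂ * 4 ≤ i₂ * k := Nat.mul_le_mul_left i₂ h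
          omega
      have hH := H (i₁ - q) (by omega)
      rw [(by omega : q + (i₁ - q) = i₁), (by omega : q + i₂ + (i₁ - q) = i₁ + i₂)] at hH
      have hnQ : ¬ QA2 i₂ i₁ (i₁ + i₂) := by
        rintro (⟨-, hb, -⟩ | heq | heq | ⟨-, hb, hcc⟩ | heq)
        · omega
        · omega
        · omega
        · have hd : 2*i₂ ∣ (2*i₁ - 1) - (i₁ + i₂) := (Nat.modEq_iff_dvd' (by omega)).mp hcc
          have hd2 : i₂ ∣ (2*i₁ - 1) - (i₁ + i₂) := dvd_trans (dvd_mul_left i₂ 2) hd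
          rw [(by omega : (2*i₁ - 1) - (i₁ + i₂) = i₁ - i₂ - 1)] at hd2
          have hd3 := Nat.dvd_sub hdvd hd2
          rw [(by omega : i₁ - (i₁ - i₂ - 1) = i₂ + 1)] at hd3
          have hd4 := Nat.dvd_sub hd3 (dvd_refl i₂)
          rw [(by omega : i₂ + 1 - i₂ = 1)] at hd4
          have := Nat.le_of_dvd one_pos hd4
          omega
        · omega
      exact hnQ (hH.mp (A2_O2 h2 hbig hdvd))
  · -- Z6b : window inside the second block
    obtain ⟨j, hj, hmod⟩ := exists_probe hm q (2*i₁ - 1)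
    have hH := H j hj
    rw [(by omega : q + i₂ + j = (q + j) + i₂)] at hH
    set p := q + j with hp
    have hple : p + i₂ + 2 ≤ 2*i₁ := by omega
    rcases mod_split hm hmod with hc | hc
    · have hpr : p + 2*i₂ + 1 ≤ 2*i₁ := by
        by_contra hh
        have := mod_forces hc (by omega) (by omega)
        omega
      have hQp : QA2 i₂ i₁ p := Or.inr (Or.inr (Or.inr (Or.inl ⟨by omega, hpr, hc⟩)))
      have hnQ : ¬ QA2 i₂ i₁ (p + i₂) := by
        rintro (⟨-, hb, -⟩ | heq | heq | ⟨-, -, hcc⟩ | heq)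
        · omega
        · omega
        · omega
        · exact himp hm hc hcc
        · -- p = 2 i₁ - 3 i₂, contradict hc
          have hp3 : p = 2*i₁ - 3*i₂ := by omega
          rw [hp3] at hc
          have hd : 2*i₂ ∣ (2*i₁ - 1) - (2*i₁ - 3*i₂) := (Nat.modEq_iff_dvd' (by omega)).mp hc
          rw [(by omega : (2*i₁ - 1) - (2*i₁ - 3*i₂) = 3*i₂ - 1)] at hd
          rcases dvd_bounds hd with h | h | h <;> omega
      exact hnQ (hH.mp hQp)
    · have hpr : p + i₂ + 2*i₂ + 1 ≤ 2*i₁ := by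
        by_contra hh
        have := mod_forces hc (by omega) (by omega)
        omega
      have hQp : QA2 i₂ i₁ (p + i₂) :=
        Or.inr (Or.inr (Or.inr (Or.inl ⟨by omega, by omega, hc⟩)))
      have hnQ : ¬ QA2 i₂ i₁ p := by
        rintro (⟨-, hb, -⟩ | heq | heq | ⟨-, -, hcc⟩ | heq)
        · omega
        · omega
        · omega
        · exact himp hm hcc hc
        · omega
      exact hnQ (hH.mpr hQp)
  · -- Z6a : q = 2 i₁ - 2 i₂, pair (2 i₁ - 2 i₂, 2 i₁ - i₂)
    have hH := H 0 (by omega)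
    rw [(by omega : q + 0 = 2*i₁ - 2*i₂), (by omega : q + i₂ + 0 = 2*i₁ - i₂)] at hH
    exact (A2_O5 h2 hbig hdvd)
      (hH.mp (Or.inr (Or.inr (Or.inr (Or.inr rfl)))))

end A2




lemma square_append_cases {w : List A} {a : A} {i : ℕ} (hi : 0 < i) (h2i : 2*i ≤ w.length)
    (hsq : ∃ v : List A, v.length = i ∧ (v ++ v) <:+: (w ++ [a])) :
    (∃ v : List A, v.length = i ∧ (v ++ v) <:+: w) ∨
    ((∀ p, w.length + 1 ≤ p + 2*i → p + i + 1 ≤ w.length → w[p]? = w[p+i]?) ∧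
      w[w.length - i]? = some a) := by
  obtain ⟨v, hvl, hinf⟩ := hsq
  obtain ⟨q, hq, he⟩ := idx_of_sq hvl hinf
  rw [List.length_append, List.length_singleton] at hq
  rcases lt_or_ge (q + 2*i) (w.length + 1) with hlt | hge
  · left
    apply sq_of_idx (q := q) (by omega)
    intro j hj
    have h1 := he j hj
    rwa [List.getElem?_append_left (by omega), List.getElem?_append_left (by omega)] at h1
  · right
    constructor
    · intro p hp1 hp2
      have h1 := he (p - q) (by omega)
      rw [(by omega : q + (p - q) = p), (by omega : q + i + (p - q) = p + i)] at h1
      rwa [List.getElem?_append_left (by omega), List.getElem?_append_left (by omega)] at h1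
    · have h1 := he (i - 1) (by omega)
      rw [(by omega : q + (i - 1) = w.length - i),
          (by omega : q + i + (i - 1) = w.length)] at h1
      rw [List.getElem?_append_left (by omega),
          List.getElem?_append_right (by omega)] at h1
      simpa using h1

lemma exists_third [Fintype A] (h3 : 3 ≤ Fintype.card A) (u v : A) :
    ∃ a : A, a ≠ u ∧ a ≠ v := by
  classical
  by_contra h
  push_neg at h
  have hsub : (Finset.univ : Finset A) ⊆ {u, v} := by
    intro a _
    simp only [Finset.mem_insert, Finset.mem_singleton]
    rcases eq_or_ne a u with h' | h'
    · exact Or.inl h'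
    · exact Or.inr (h a h')
  have hle := Finset.card_le_card hsub
  have hc : ({u, v} : Finset A).card ≤ 2 := by
    apply le_trans (Finset.card_insert_le u {v})
    simp
  rw [Finset.card_univ] at hle
  omega

lemma backward_two (x y : A) (hxy : x ≠ y) (hbin : ∀ c : A, c = x ∨ c = y)
    (i₂ i₁ : ℕ) (h2 : 1 ≤ i₂) (hlt : i₂ < i₁) (hcase : 2*i₂ = i₁ ∨ i₂ = 1)
    (w : List A) (hwlen : w.length = 2*i₁)
    (hsf : ∀ i, (i = i₂ ∨ i = i₁) → ∀ q, q + 2*i ≤ w.length →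
      ∃ j, j < i ∧ w[q+j]? ≠ w[q+i+j]?)
    (hperx : ∀ p, w.length + 1 ≤ p + 2*i₂ → p + i₂ + 1 ≤ w.length → w[p]? = w[p+i₂]?)
    (hvalx : w[w.length - i₂]? = some x)
    (hpery : ∀ p, w.length + 1 ≤ p + 2*i₁ → p + i₁ + 1 ≤ w.length → w[p]? = w[p+i₁]?)
    (hvaly : w[w.length - i₁]? = some y) : False := by
  obtain ⟨f, hf⟩ : ∃ f : ℕ → A, ∀ p, p < 2*i₁ → w[p]? = some (f p) := by
    refine ⟨fun p => (w[p]?).getD x, fun p hp => ?_⟩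
    simp [List.getElem?_eq_getElem (show p < w.length by omega)]
  have Fx : f (2*i₁ - i₂) = x := by
    rw [hwlen] at hvalx
    rw [hf _ (by omega)] at hvalx
    exact Option.some_inj.mp hvalx
  have Fy : f i₁ = y := by
    rw [hwlen, (by omega : 2*i₁ - i₁ = i₁)] at hvaly
    rw [hf _ (by omega)] at hvaly
    exact Option.some_inj.mp hvaly
  have Px : ∀ p, 2*i₁ + 1 ≤ p + 2*i₂ → p + i₂ + 1 ≤ 2*i₁ → f p = f (p + i₂) := by
    intro p hp1 hp2
    have := hperx p (by omega) (by omega)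
    rw [hf _ (by omega), hf _ (by omega)] at this
    exact Option.some_inj.mp this
  have Py : ∀ p, 1 ≤ p → p + i₁ + 1 ≤ 2*i₁ → f p = f (p + i₁) := by
    intro p hp1 hp2
    have := hpery p (by omega) (by omega)
    rw [hf _ (by omega), hf _ (by omega)] at this
    exact Option.some_inj.mp this
  have Sf : ∀ i, (i = i₂ ∨ i = i₁) → ∀ q, q + 2*i ≤ 2*i₁ →
      ∃ j, j < i ∧ f (q+j) ≠ f (q+i+j) := by
    intro i hi q hq
    obtain ⟨j, hj, hne⟩ := hsf i hi q (by omega)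
    refine ⟨j, hj, fun hEq => hne ?_⟩
    have hqj : q + j < 2*i₁ := by rcases hi with rfl | rfl <;> omega
    have hqij : q + i + j < 2*i₁ := by rcases hi with rfl | rfl <;> omega
    rw [hf _ hqj, hf _ hqij, hEq]
  -- the word itself is not an i₁-square, so f 0 ≠ f i₁
  have hj0 : f 0 ≠ f i₁ := by
    obtain ⟨j, hj, hne⟩ := Sf i₁ (Or.inr rfl) 0 (by omega)
    rcases Nat.eq_zero_or_pos j with rfl | hj1
    · rw [(by omega : 0 + 0 = 0), (by omega : 0 + i₁ + 0 = i₁)] at hne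
      exact hne
    · exfalso
      apply hne
      have := Py j hj1 (by omega)
      rw [(by omega : 0 + j = j), (by omega : 0 + i₁ + j = j + i₁)]
      exact this
  have hf0 : f 0 = x := by
    rcases hbin (f 0) with h | h
    · exact h
    · exact absurd (h.trans Fy.symm) hj0
  rcases hcase with hc2 | hc1
  · -- 2 i₂ = i₁
    subst hc2
    have e1 : ∀ p, 1 ≤ p → p + 1 ≤ 2*i₂ → f p = f (p + 2*i₂) := by
      intro p hp1 hp2
      exact Py p hp1 (by omega)
    have e2 : ∀ p, 2*i₂ + 1 ≤ p → p + i₂ + 1 ≤ 4*i₂ → f p = f (p + i₂) := by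
      intro p hp1 hp2
      exact Px p (by omega) (by omega)
    have key : ∀ j, j < i₂ → f (0 + j) = f (0 + i₂ + j) := by
      intro j hj
      rcases Nat.eq_zero_or_pos j with rfl | hj1
      · rw [(by omega : 0 + 0 = 0), (by omega : 0 + i₂ + 0 = i₂)]
        have ha : f i₂ = f (i₂ + 2*i₂) := e1 i₂ (by omega) (by omega)
        have hb : f (i₂ + 2*i₂) = x := by
          rw [(by omega : i₂ + 2*i₂ = 2*(2*i₂) - i₂)]
          exact Fx
        rw [hf0, ha, hb]
      · rw [(by omega : 0 + j = j), (by omega : 0 + i₂ + j = j + i₂)]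
        have ha : f j = f (j + 2*i₂) := e1 j hj1 (by omega)
        have hb : f (j + 2*i₂) = f (j + 2*i₂ + i₂) := e2 (j + 2*i₂) (by omega) (by omega)
        have hd : f (j + i₂) = f (j + i₂ + 2*i₂) := e1 (j + i₂) (by omega) (by omega)
        rw [ha, hb, hd]
        congr 1
        omega
    obtain ⟨j, hj, hne⟩ := Sf i₂ (Or.inl rfl) 0 (by omega)
    exact hne (key j hj)
  · -- i₂ = 1
    subst hc1
    have alt : ∀ p, p + 2 ≤ 2*i₁ → f p ≠ f (p + 1) := by
      intro p hp
      obtain ⟨j, hj, hne⟩ := Sf 1 (Or.inl rfl) p (by omega)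
      have hj' : j = 0 := by omega
      subst hj'
      rw [(by omega : p + 0 = p), (by omega : p + 1 + 0 = p + 1)] at hne
      exact hne
    have step2 : ∀ p, p + 3 ≤ 2*i₁ → f p = f (p + 2) := by
      intro p hp
      have h1 := alt p (by omega)
      have h2 := alt (p + 1) (by omega)
      rw [(by omega : p + 1 + 1 = p + 2)] at h2
      rcases hbin (f p) with ha | ha <;> rcases hbin (f (p+2)) with hc | hc
      · rw [ha, hc]
      · exfalso
        rcases hbin (f (p+1)) with hb | hb
        · exact h1 (ha.trans hb.symm)
        · exact h2 (hb.trans hc.symm)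
      · exfalso
        rcases hbin (f (p+1)) with hb | hb
        · exact h2 (hb.trans hc.symm)
        · exact h1 (ha.trans hb.symm)
      · rw [ha, hc]
    have claim : ∀ k p, p + 2*k + 1 ≤ 2*i₁ → f p = f (p + 2*k) := by
      intro k
      induction k with
      | zero => intro p hp; simp
      | succ n ih =>
        intro p hp
        have h1 := step2 p (by omega)
        have h2 := ih (p + 2) (by omega)
        rw [h1, h2]
        congr 1
        omega
    rcases Nat.even_or_odd i₁ with ⟨k, hk⟩ | ⟨k, hk⟩
    · have h1 := claim k 0 (by omega)
      rw [(by omega : 0 + 2*k = i₁)] at h1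
      exact hj0 h1
    · have h1 := Py 1 (by omega) (by omega)
      have h2 := alt 1 (by omega)
      have h3 := claim k 2 (by omega)
      rw [(by omega : 2 + 2*k = 1 + i₁)] at h3
      exact h2 (h1.trans h3.symm)

end DeadEndAux

lemma two_complete {A : Type*} [Fintype A] (hc : Fintype.card A < 3) {x y : A}
    (hxy : x ≠ y) : ∀ c : A, c = x ∨ c = y := by
  classical
  intro c
  by_contra hcc
  push_neg at hcc
  obtain ⟨hcx, hcy⟩ := hcc
  have hcard3 : ({x, y, c} : Finset A).card = 3 := by
    rw [Finset.card_insert_of_notMem (by simp [hxy, Ne.symm hcx]),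
        Finset.card_insert_of_notMem (by simp [Ne.symm hcy]),
        Finset.card_singleton]
  have hle := Finset.card_le_univ ({x, y, c} : Finset A)
  rw [hcard3] at hle
  omega

/-- For `s = (i₂, i₁)` with `1 ≤ i₂ < i₁` and an alphabet `A` with at least two
letters, the graph `G(s)` on `{i₂,i₁}`-squarefree words of length `2 i₁` has no
dead-ends (i.e. every such squarefree word can be extended by a letter without
creating a square `v ++ v` with `|v| ∈ {i₂, i₁}`) if and only if `|A| ≥ 3`, or
`2 i₂ = i₁`, or `i₂ = 1`. -/
theorem no_dead_ends_iff_r_two {A : Type*} [Fintype A]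
    (hA : 2 ≤ Fintype.card A) (i₂ i₁ : ℕ) (h2 : 1 ≤ i₂) (hlt : i₂ < i₁) :
    (∀ w : List A, w.length = 2 * i₁ →
        (∀ i ∈ ({i₂, i₁} : Set ℕ),
          ¬ ∃ v : List A, v.length = i ∧ (v ++ v) <:+: w) →
        ∃ a : A, ∀ i ∈ ({i₂, i₁} : Set ℕ),
          ¬ ∃ v : List A, v.length = i ∧ (v ++ v) <:+: (w ++ [a]))
      ↔ (3 ≤ Fintype.card A ∨ 2 * i₂ = i₁ ∨ i₂ = 1) := by
  constructor
  · -- forward: if no dead-ends then the arithmetic condition holds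
    intro hL
    by_contra hR
    push_neg at hR
    obtain ⟨h3, hne, hone⟩ := hR
    have h2' : 2 ≤ i₂ := by omega
    obtain ⟨x, y, hxy⟩ := Fintype.exists_pair_of_one_lt_card (α := A) (by omega)
    have hbin : ∀ c : A, c = x ∨ c = y := two_complete (by omega) hxy
    have hw : ∃ w : List A, w.length = 2*i₁ ∧
        (∀ i ∈ ({i₂, i₁} : Set ℕ), ¬ ∃ v : List A, v.length = i ∧ (v ++ v) <:+: w) ∧
        (∀ a : A, a = x ∨ a = y →
          ∃ i ∈ ({i₂, i₁} : Set ℕ), ∃ v : List A, v.length = i ∧ (v ++ v) <:+: (w ++ [a])) := by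
      rcases (by omega : i₁ < 2*i₂ ∨ 2*i₂ < i₁) with hc | hc
      · exact deadend_exists hxy i₂ i₁ h2 hlt (QB i₂ i₁) (B_O1 i₂ i₁) (B_O2 i₂ i₁ h2 hlt)
          (B_O3 i₂ i₁ h2 hlt) (B_O4 i₂ i₁ h2 hlt hc) (B_O5 i₂ i₁ h2 hlt)
          (B_O6 i₂ i₁ h2 hlt hc)
      · by_cases hd : i₂ ∣ i₁
        · exact deadend_exists hxy i₂ i₁ h2 hlt (QA2 i₂ i₁) (A2_O1 h2' hc hd)
            (A2_O2 h2' hc hd) (A2_O3 h2' hc hd) (A2_O4 h2' hc hd) (A2_O5 h2' hc hd)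
            (A2_O6 h2' hc hd)
        · exact deadend_exists hxy i₂ i₁ h2 hlt (QA1 i₂ i₁) (A1_O1 h2 hc hd)
            (A1_O2 h2 hc hd) (A1_O3 h2 hc hd) (A1_O4 h2 hc hd) (A1_O5 h2 hc hd)
            (A1_O6 h2 hc hd)
    obtain ⟨w, hwlen, hwsf, hwdead⟩ := hw
    obtain ⟨a, ha⟩ := hL w (by omega) hwsf
    obtain ⟨i, hi, hsq⟩ := hwdead a (hbin a)
    exact ha i hi hsq
  · -- backward
    intro hR w hwlen hwsf
    by_contra hno
    push_neg at hno
    have hwlen' : w.length = 2*i₁ := by omega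
    have hsfI : ∀ i, (i = i₂ ∨ i = i₁) → ∀ q, q + 2*i ≤ w.length →
        ∃ j, j < i ∧ w[q+j]? ≠ w[q+i+j]? := by
      intro i hi q hq
      by_contra h
      push_neg at h
      exact hwsf i (by simpa using hi) (sq_of_idx hq h)
    have hdata : ∀ a : A, ∃ i, (i = i₂ ∨ i = i₁) ∧
        (∀ p, w.length + 1 ≤ p + 2*i → p + i + 1 ≤ w.length → w[p]? = w[p+i]?) ∧
        w[w.length - i]? = some a := by
      intro a
      obtain ⟨i, hi, hsq⟩ := hno a
      have hi' : i = i₂ ∨ i = i₁ := by simpa using hi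
      have hipos : 0 < i := by rcases hi' with rfl | rfl <;> omega
      have h2i : 2*i ≤ w.length := by rcases hi' with rfl | rfl <;> omega
      rcases square_append_cases hipos h2i hsq with h | h
      · exact absurd h (hwsf i hi)
      · exact ⟨i, hi', h⟩
    by_cases h3 : 3 ≤ Fintype.card A
    · -- three letters: avoid both forbidden letters
      have hc2 : w.length - i₂ < w.length := by omega
      have hc1 : w.length - i₁ < w.length := by omega
      obtain ⟨a, ha2, ha1⟩ := exists_third h3 (w[w.length - i₂]'hc2) (w[w.length - i₁]'hc1)
      obtain ⟨i, hi', hper, hval⟩ := hdata a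
      rcases hi' with rfl | rfl
      · rw [List.getElem?_eq_getElem hc2] at hval
        exact ha2 (Option.some_inj.mp hval).symm
      · rw [List.getElem?_eq_getElem hc1] at hval
        exact ha1 (Option.some_inj.mp hval).symm
    · -- two letters
      have hcase : 2*i₂ = i₁ ∨ i₂ = 1 := by
        rcases hR with h | h | h
        · omega
        · exact Or.inl h
        · exact Or.inr h
      obtain ⟨x, y, hxy⟩ := Fintype.exists_pair_of_one_lt_card (α := A) (by omega)
      have hbin : ∀ c : A, c = x ∨ c = y := two_complete (by omega) hxy
      obtain ⟨ix, hix, hperx, hvalx⟩ := hdata x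
      obtain ⟨iy, hiy, hpery, hvaly⟩ := hdata y
      have hixy : ix ≠ iy := by
        rintro rfl
        rw [hvalx] at hvaly
        exact hxy (Option.some_inj.mp hvaly)
      rcases hix with h | h <;> rcases hiy with h' | h'
      · exact hixy (h.trans h'.symm)
      · rw [h] at hperx hvalx
        rw [h'] at hpery hvaly
        exact backward_two x y hxy hbin i₂ i₁ h2 hlt hcase w hwlen' hsfI
          hperx hvalx hpery hvaly
      · rw [h] at hperx hvalx
        rw [h'] at hpery hvaly
        exact backward_two y x hxy.symm (fun c => (hbin c).symm) i₂ i₁ h2 hlt hcase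
          w hwlen' hsfI hpery hvaly hperx hvalx
      · exact hixy (h.trans h'.symm)
end

section
/- Let s = (i_r, …, i₂, i₁) be a strictly increasing sequence of positive integers (i₁ largest), r ≥ 3, with i₁ = i₂ + ⋯ + i_{r−1} + i_r, and suppose i_r ≥ 2 and (i₁,…,i_{r−1}) and (i₂,…,i_r) satisfy condition C. Let ∼ be the smallest equivalence relation on [2i₁] invariant under all τ_{i_j}, i_j ∈ s. Then i_r ∼ i₁, and consequently the corresponding generic word has an i_r-square starting at position i₁; hence every word of length 2i₁ satisfying the invariance conditions w_t = w_{t+i_j} (for 0 < t < i_j, all j) contains an i_r-square. -/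
/-- The involution `τ_i`. -/
def tauInv (i t : ℕ) : ℕ :=
  if 0 < t ∧ t < i then t + i
  else if i < t ∧ t < 2 * i then t - i
  else t

/-!
Write `S j = i j + ⋯ + i r` for the suffix sums, so that `S 2 = i 1` and `S r = i r`.
Condition C for `(i₂, …, i_r)` says `0 < S (j + 1) < i j`, hence `τ_{i j}` maps
`S j = i j + S (j + 1)` to `S (j + 1)`, and the chain `i 1 = S 2 ∼ S 3 ∼ ⋯ ∼ S r = i r`
gives `i r ∼ i 1`. A word satisfying the invariance conditions is constant on `∼`-classes,
so `w (i 1) = w (i r) = w (i r + i 1)`; together with the periods `i 1` and `i r` on the first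
blocks this makes the factor of length `2 i r` starting at `i 1` a square.
-/

open Finset Relation

theorem tauInv_add_of_pos_of_lt {i t : ℕ} (ht₀ : 0 < t) (hti : t < i) : tauInv i (i + t) = t := by
  unfold tauInv
  rw [if_neg (by omega), if_pos (by omega)]
  omega

theorem apply_tauInv {A : Type*} {w : ℕ → A} {p : ℕ}
    (hw : ∀ t, 1 ≤ t → t < p → w t = w (t + p)) (a : ℕ) : w (tauInv p a) = w a := by
  unfold tauInv
  split_ifs with h₁ h₂
  · exact (hw a h₁.1 h₁.2).symm
  · simpa [Nat.sub_add_cancel h₂.1.le] using hw (a - p) (by omega) (by omega)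
  · rfl

theorem Relation.EqvGen.apply_eq {α β : Type*} {R : α → α → Prop} {f : α → β}
    (hf : ∀ a b, R a b → f a = f b) {a b : α} (h : EqvGen R a b) : f a = f b :=
  congrArg (Quot.lift f hf) (Quot.eqvGen_sound h)

theorem Relation.eqvGen_apply_of_succ_of_le {α : Type*} {R : α → α → Prop} (f : ℕ → α)
    {m n : ℕ} (hmn : m ≤ n) (h : ∀ j, m ≤ j → j < n → R (f j) (f (j + 1))) :
    EqvGen R (f m) (f n) :=
  EqvGen.reflTransGen_le_eqvGen _ _ _
    ((reflTransGen_of_succ_of_le (Function.onFun R f) (fun j hj => h j hj.1 hj.2) hmn).lift f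
      fun _ _ => id)

theorem tauInv_sum_Icc {i : ℕ → ℕ} {j r : ℕ} (hjr : j < r) (hr : 0 < i r)
    (hC : ∑ k ∈ Icc (j + 1) r, i k < i j) :
    tauInv (i j) (∑ k ∈ Icc j r, i k) = ∑ k ∈ Icc (j + 1) r, i k := by
  have hpos : 0 < ∑ k ∈ Icc (j + 1) r, i k :=
    hr.trans_le (single_le_sum (fun _ _ => Nat.zero_le _) (mem_Icc.mpr ⟨by omega, by omega⟩))
  rw [← add_sum_Ioc_eq_sum_Icc hjr.le, ← Icc_add_one_left_eq_Ioc, tauInv_add_of_pos_of_lt hpos hC]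

theorem eqvGen_sum_Icc_last {R : ℕ → ℕ → Prop} {i : ℕ → ℕ} {m r : ℕ} (hmr : m ≤ r)
    (hr : 0 < i r) (hR : ∀ j, m ≤ j → j < r → ∀ a, R a (tauInv (i j) a))
    (hC : ∀ t, m ≤ t → t < r → ∑ k ∈ Icc (t + 1) r, i k < i t) :
    EqvGen R (∑ k ∈ Icc m r, i k) (i r) := by
  have hchain := eqvGen_apply_of_succ_of_le (R := R) (fun j => ∑ k ∈ Icc j r, i k) hmr
    fun j hmj hjr => by
      simpa only [tauInv_sum_Icc hjr hr (hC j hmj hjr)] using hR j hmj hjr (∑ k ∈ Icc j r, i k)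
  simpa using hchain

theorem exists_square_of_periods {A : Type*} {w : ℕ → A} {p q : ℕ} (hq : 0 < q)
    (hqp : 2 * q ≤ p) (hwp : ∀ t, 1 ≤ t → t < p → w t = w (t + p))
    (hwq : ∀ t, 1 ≤ t → t < q → w t = w (t + q)) (hpq : w q = w p) :
    ∃ x, 1 ≤ x ∧ x + 2 * q - 1 ≤ 2 * p ∧ ∀ t < q, w (x + t) = w (x + t + q) := by
  refine ⟨p, by omega, by omega, fun t htq => ?_⟩
  rcases Nat.eq_zero_or_pos t with rfl | ht
  · rw [add_zero, ← hpq, hwp q hq (by omega), add_comm]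
  · calc w (p + t) = w t := by rw [hwp t ht (by omega), add_comm]
      _ = w (t + q) := hwq t ht htq
      _ = w (p + t + q) := by rw [hwp (t + q) (by omega) (by omega)]; ring_nf

theorem ir_equiv_i1_of_sum_general {A : Type*} (r : ℕ) (hr : 3 ≤ r) (i : ℕ → ℕ)
    (hge2 : 2 ≤ i r)
    (hsum : i 1 = ∑ j ∈ Finset.Icc 2 r, i j)
    (hC2 : ∀ t, 2 ≤ t → t ≤ r - 1 → ∑ j ∈ Finset.Icc (t + 1) r, i j < i t) :
    Relation.EqvGen
      (fun a b => ∃ j, 1 ≤ j ∧ j ≤ r ∧ b = tauInv (i j) a)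
      (i r) (i 1) ∧
    ∀ w : ℕ → A,
      (∀ j, 1 ≤ j → j ≤ r → ∀ t, 1 ≤ t → t < i j → w t = w (t + i j)) →
      ∃ x, 1 ≤ x ∧ x + 2 * i r - 1 ≤ 2 * i 1 ∧
        ∀ t < i r, w (x + t) = w (x + t + i r) := by
  have hC : ∀ t, 2 ≤ t → t < r → ∑ k ∈ Icc (t + 1) r, i k < i t :=
    fun t h2t htr => hC2 t h2t (by omega)
  have hequiv : EqvGen (fun a b => ∃ j, 1 ≤ j ∧ j ≤ r ∧ b = tauInv (i j) a) (i 1) (i r) :=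
    hsum ▸ eqvGen_sum_Icc_last (by omega) (by omega)
      (fun j h2j hjr _ => ⟨j, by omega, hjr.le, rfl⟩) hC
  refine ⟨hequiv.symm, fun w hw => ?_⟩
  have hlast : i r < i (r - 1) := by
    simpa [Nat.sub_add_cancel (by omega : 1 ≤ r)] using hC (r - 1) (by omega) (by omega)
  have hpair : i (r - 1) + i r ≤ i 1 :=
    hsum ▸ add_le_sum (fun _ _ => Nat.zero_le _) (mem_Icc.mpr ⟨by omega, by omega⟩)
      (mem_Icc.mpr ⟨by omega, le_rfl⟩) (by omega)
  have hw_eq : w (i r) = w (i 1) :=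
    hequiv.symm.apply_eq fun a b ⟨j, h1j, hjr, hb⟩ => hb ▸ (apply_tauInv (hw j h1j hjr) a).symm
  exact exists_square_of_periods (by omega) (by omega) (hw 1 le_rfl (by omega))
    (hw r (by omega) le_rfl) hw_eq

/-- Suppose `r ≥ 3`, `i₁ > i₂ > ⋯ > i_r ≥ 2`, `i₁ = i₂ + ⋯ + i_r`, and both
`(i₁, …, i_{r−1})` and `(i₂, …, i_r)` satisfy condition C.  Then `i_r ∼ i₁`
in the smallest equivalence relation on `[2 i₁]` invariant under all
`τ_{i_j}`, and consequently every word of length `2 i₁` (over any alphabet)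
satisfying the invariance conditions contains an `i_r`-square. -/
theorem ir_equiv_i1_of_sum {A : Type*} (r : ℕ) (hr : 3 ≤ r) (i : ℕ → ℕ)
    (hge2 : 2 ≤ i r)
    (hdec : ∀ t, 1 ≤ t → t < r → i (t + 1) < i t)
    (hsum : i 1 = ∑ j ∈ Finset.Icc 2 r, i j)
    (hC1 : ∀ t, 1 ≤ t → t ≤ r - 2 → ∑ j ∈ Finset.Icc (t + 1) (r - 1), i j < i t)
    (hC2 : ∀ t, 2 ≤ t → t ≤ r - 1 → ∑ j ∈ Finset.Icc (t + 1) r, i j < i t) :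
    Relation.EqvGen
      (fun a b => ∃ j, 1 ≤ j ∧ j ≤ r ∧ b = tauInv (i j) a)
      (i r) (i 1) ∧
    ∀ w : ℕ → A,
      (∀ j, 1 ≤ j → j ≤ r → ∀ t, 1 ≤ t → t < i j → w t = w (t + i j)) →
      ∃ x, 1 ≤ x ∧ x + 2 * i r - 1 ≤ 2 * i 1 ∧
        ∀ t < i r, w (x + t) = w (x + t + i r) :=
  ir_equiv_i1_of_sum_general r hr i hge2 hsum hC2
end

section
/- If a strictly increasing sequence s of positive integers (written i_r < ⋯ < i₁) fails condition C (i.e., i_t ≤ i_{t+1} + ⋯ + i_r for some t), then s contains a subsequence s' = (i_{j_k}, …, i_{j_1}) which either satisfies i_{j_1} = i_{j_2} + ⋯ + i_{j_k} or satisfies condition D. -/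
/-!
Take the largest index `t` at which condition C fails, so that `i u` exceeds its tail sum for
every `u > t`, and let `m` be the first index at which the partial sum `i (t+1) + ⋯ + i m`
reaches `i t`. The consecutive block `i t, i (t+1), …, i m` is then the required subsequence:
either the partial sum hits `i t` exactly, or it overshoots and condition D holds, its last
clause being inherited from the maximality of `t` since a sub-block of a tail has a smaller sum.
-/

open Finset

theorem Finset.sum_Icc_add_right {M : Type*} [AddCommMonoid M] (f : ℕ → M) (a b c : ℕ) :
    ∑ l ∈ Icc a b, f (l + c) = ∑ l ∈ Icc (a + c) (b + c), f l := by
  rw [← map_add_right_Icc, sum_map]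
  rfl

theorem Nat.exists_greatest_le_of_exists (P : ℕ → Prop) {n : ℕ} (h : ∃ t ≤ n, P t) :
    ∃ t ≤ n, P t ∧ ∀ u, t < u → u ≤ n → ¬P u := by
  classical
  obtain ⟨t, htn, ht⟩ := h
  exact ⟨Nat.findGreatest P n, Nat.findGreatest_le n, Nat.findGreatest_spec htn ht,
    fun _ hu hun => Nat.findGreatest_is_greatest hu hun⟩

theorem exists_least_partial_sum_ge (f : ℕ → ℕ) {x a r : ℕ} (hx : 0 < x)
    (h : x ≤ ∑ l ∈ Icc a r, f l) :
    ∃ m, a ≤ m ∧ m ≤ r ∧ x ≤ ∑ l ∈ Icc a m, f l ∧ ∀ m' < m, ∑ l ∈ Icc a m', f l < x := by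
  classical
  have hex : ∃ m, x ≤ ∑ l ∈ Icc a m, f l := ⟨r, h⟩
  refine ⟨Nat.find hex, ?_, Nat.find_min' hex h, Nat.find_spec hex,
    fun m' hm' => not_le.mp (Nat.find_min hex hm')⟩
  by_contra! hlt
  have := Nat.find_spec hex
  rw [Icc_eq_empty_of_lt hlt, sum_empty] at this
  omega

theorem exists_greatest_failure_of_condition_C {r : ℕ} {i : ℕ → ℕ}
    (hfail : ∃ t, 1 ≤ t ∧ t ≤ r - 1 ∧ i t ≤ ∑ l ∈ Icc (t + 1) r, i l) :
    ∃ t, 1 ≤ t ∧ t ≤ r - 1 ∧ i t ≤ ∑ l ∈ Icc (t + 1) r, i l ∧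
      ∀ u, t < u → u ≤ r - 1 → ∑ l ∈ Icc (u + 1) r, i l < i u := by
  obtain ⟨t₀, ht₀, ht₀r, hfail₀⟩ := hfail
  obtain ⟨t, htr, ⟨ht, hfail_t⟩, hmax⟩ :=
    Nat.exists_greatest_le_of_exists (fun u => 1 ≤ u ∧ i u ≤ ∑ l ∈ Icc (u + 1) r, i l)
      ⟨t₀, ht₀r, ht₀, hfail₀⟩
  exact ⟨t, ht, htr, hfail_t, fun u hu hur =>
    not_le.mp fun hu_fail => hmax u hu hur ⟨by omega, hu_fail⟩⟩

theorem subsequence_sum_or_condition_D_general (r : ℕ) (i : ℕ → ℕ)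
    (hpos : ∀ t, 1 ≤ t → t ≤ r → 1 ≤ i t)
    (hfail : ∃ t, 1 ≤ t ∧ t ≤ r - 1 ∧ i t ≤ ∑ l ∈ Finset.Icc (t + 1) r, i l) :
    ∃ k, 2 ≤ k ∧ k ≤ r ∧ ∃ j : ℕ → ℕ,
      (∀ l, 1 ≤ l → l < k → j l < j (l + 1)) ∧
      (∀ l, 1 ≤ l → l ≤ k → 1 ≤ j l ∧ j l ≤ r) ∧
      (i (j 1) = ∑ l ∈ Finset.Icc 2 k, i (j l) ∨
        (i (j 1) < ∑ l ∈ Finset.Icc 2 k, i (j l) ∧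
         (∑ l ∈ Finset.Icc 2 (k - 1), i (j l)) < i (j 1) ∧
         ∀ t, 2 ≤ t → t ≤ k - 1 →
           (∑ l ∈ Finset.Icc (t + 1) k, i (j l)) < i (j t))) := by
  obtain ⟨t, ht, htr, htail, hmax⟩ := exists_greatest_failure_of_condition_C hfail
  obtain ⟨m, htm, hmr, hreach, hbelow⟩ :=
    exists_least_partial_sum_ge i (hpos t ht (by omega)) htail
  set c := t - 1
  refine ⟨m - c, by omega, by omega, (· + c), fun l _ _ => by dsimp only; omega,
    fun l _ _ => by dsimp only; omega, ?_⟩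
  simp only [sum_Icc_add_right, show 1 + c = t by omega, show 2 + c = t + 1 by omega,
    show m - c + c = m by omega, show m - c - 1 + c = m - 1 by omega]
  rcases hreach.eq_or_lt with heq | hlt
  · exact Or.inl heq
  refine Or.inr ⟨hlt, hbelow (m - 1) (by omega), fun s hs hsk => ?_⟩
  calc ∑ l ∈ Icc (s + 1 + c) m, i l
      ≤ ∑ l ∈ Icc (s + c + 1) r, i l :=
        sum_le_sum_of_subset (Icc_subset_Icc (by omega) (by omega))
    _ < i (s + c) := hmax (s + c) (by omega) (by omega)

/-- If a strictly increasing sequence `i_r < ⋯ < i₁` of positive integers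
(indexed so that `i 1` is largest) fails condition C, i.e.
`i t ≤ i_{t+1} + ⋯ + i_r` for some `1 ≤ t ≤ r − 1`, then it has a subsequence
`(i_{j_k} < ⋯ < i_{j_1})` which either satisfies
`i_{j_1} = i_{j_2} + ⋯ + i_{j_k}` or satisfies condition D. -/
theorem subsequence_sum_or_condition_D (r : ℕ) (i : ℕ → ℕ)
    (hpos : ∀ t, 1 ≤ t → t ≤ r → 1 ≤ i t)
    (hdec : ∀ t, 1 ≤ t → t < r → i (t + 1) < i t)
    (hfail : ∃ t, 1 ≤ t ∧ t ≤ r - 1 ∧ i t ≤ ∑ l ∈ Finset.Icc (t + 1) r, i l) :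
    ∃ k, 2 ≤ k ∧ k ≤ r ∧ ∃ j : ℕ → ℕ,
      (∀ l, 1 ≤ l → l < k → j l < j (l + 1)) ∧
      (∀ l, 1 ≤ l → l ≤ k → 1 ≤ j l ∧ j l ≤ r) ∧
      (i (j 1) = ∑ l ∈ Finset.Icc 2 k, i (j l) ∨
        (i (j 1) < ∑ l ∈ Finset.Icc 2 k, i (j l) ∧
         (∑ l ∈ Finset.Icc 2 (k - 1), i (j l)) < i (j 1) ∧
         ∀ t, 2 ≤ t → t ≤ k - 1 →
           (∑ l ∈ Finset.Icc (t + 1) k, i (j l)) < i (j t))) :=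
  subsequence_sum_or_condition_D_general r i hpos hfail
end

section
/- For s = (i_r, 2i_r, 4i_r, …, 2^{r−1} i_r) with i_r ≥ 2 (i.e., i_j = 2^{r−j} i_r, so 2i_j = i_{j−1} for all j), any word w of length 2^r i_r over an alphabet of r letters satisfying w_t = w_{t+i_j} for all 0 < t < i_j and all 1 ≤ j ≤ r contains a square vv with |v| = i_j for some j; but over an alphabet of r+1 letters there is such a word with no square of these half-lengths. (minA(s) = r+1.) -/
namespace MinAAux

lemma propA {α : Type*} (r c : ℕ) (w : ℕ → α)
    (H : ∀ j, 1 ≤ j → j ≤ r → ∀ t, 1 ≤ t → t < 2 ^ (r - j) * c →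
        w t = w (t + 2 ^ (r - j) * c)) :
    ∀ k, 1 ≤ k → k ≤ r → ∀ t, 1 ≤ t → t < 2 ^ (r - k) * c →
      ∀ q, q < 2 ^ k → w (t + q * (2 ^ (r - k) * c)) = w t := by
  intro k
  induction k with
  | zero => omega
  | succ k ih =>
    intro _ hkr t ht htlt q hq
    rcases Nat.eq_zero_or_pos k with rfl | hk
    · interval_cases q
      · simp
      · simpa using (H 1 le_rfl hkr t ht htlt).symm
    · have hd : 2 ^ (r - k) = 2 * 2 ^ (r - (k+1)) := by
        rw [← pow_succ']
        congr 1
        omega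
      set d := 2 ^ (r - (k+1)) * c with hdd
      have key : ∀ b < 2, ∀ q' < 2 ^ k, q = 2 * q' + b →
          w (t + q * d) = w t := by
        intro b hb q' hq' hqq
        have ht' : w (t + b * d) = w t := by
          interval_cases b
          · simp
          · simpa using (H (k+1) (by omega) hkr t ht htlt).symm
        have htlt' : t + b * d < 2 ^ (r - k) * c := by
          rw [hd]
          have : b * d ≤ d := by
            calc b * d ≤ 1 * d := Nat.mul_le_mul_right _ (by omega)
            _ = d := one_mul d
          have h2 : (2 * 2 ^ (r - (k+1))) * c = 2 * (2 ^ (r - (k+1)) * c) := by ring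
          omega
        have := ih (by omega) (by omega) (t + b * d) (by omega) htlt' q' hq'
        rw [ht'] at this
        rw [← this]
        congr 1
        rw [hd, hqq]
        ring
      have hpow : 2 ^ (k+1) = 2 * 2 ^ k := by ring
      exact key (q % 2) (Nat.mod_lt _ (by norm_num)) (q / 2)
        (by omega) (by omega)

section Part1
variable {α : Type*} (r c : ℕ) (hr : 1 ≤ r) (hc : 2 ≤ c) (w : ℕ → α)
  (H : ∀ j, 1 ≤ j → j ≤ r → ∀ t, 1 ≤ t → t < 2 ^ (r - j) * c →
        w t = w (t + 2 ^ (r - j) * c))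

include hc H

lemma sqS1 {j k : ℕ} (hj : 1 ≤ j) (hjk : j < k) (hkr : k ≤ r)
    (heq : w (2 ^ (r - j) * c) = w (2 ^ (r - k) * c)) :
    ∃ j, 1 ≤ j ∧ j ≤ r ∧ ∃ x, 1 ≤ x ∧
      x + 2 * (2 ^ (r - j) * c) - 1 ≤ 2 ^ r * c ∧
      ∀ t < 2 ^ (r - j) * c, w (x + t) = w (x + t + 2 ^ (r - j) * c) := by
  set dj := 2 ^ (r - j) * c with hdj
  set dk := 2 ^ (r - k) * c with hdk
  have hA := propA r c w H k (by omega) hkr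
  have hsplit : 2 ^ (r - j) = 2 ^ (k - j) * 2 ^ (r - k) := by
    rw [← pow_add]; congr 1; omega
  have hdjk : dj = 2 ^ (k - j) * dk := by rw [hdj, hdk, hsplit]; ring
  have h2 : 2 ≤ 2 ^ (k - j) := by
    calc (2:ℕ) = 2 ^ 1 := (pow_one 2).symm
    _ ≤ 2 ^ (k - j) := Nat.pow_le_pow_right (by norm_num) (by omega)
  have hqk : 2 ^ (k - j) < 2 ^ k := Nat.pow_lt_pow_right (by norm_num) (by omega)
  have hdkpos : 1 ≤ dk := by
    have : 1 ≤ 2 ^ (r - k) := Nat.one_le_two_pow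
    calc 1 ≤ 1 * c := by omega
    _ ≤ 2 ^ (r - k) * c := Nat.mul_le_mul_right _ this
  have hdjdk : 2 * dk ≤ dj := by
    calc 2 * dk ≤ 2 ^ (k - j) * dk := Nat.mul_le_mul_right _ h2
    _ = dj := hdjk.symm
  have hdjle : dj ≤ 2 ^ (r - 1) * c :=
    Nat.mul_le_mul_right _ (Nat.pow_le_pow_right (by norm_num) (by omega))
  have hdkle : dk ≤ 2 ^ (r - 1) * c :=
    Nat.mul_le_mul_right _ (Nat.pow_le_pow_right (by norm_num) (by omega))
  have htop : 2 ^ r * c = 2 * (2 ^ (r - 1) * c) := by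
    have : 2 ^ r = 2 * 2 ^ (r - 1) := by
      rw [← pow_succ']; congr 1; omega
    rw [this]; ring
  refine ⟨k, by omega, hkr, dj - dk + 1, by omega, by omega, ?_⟩
  intro t htlt
  rcases Nat.lt_or_ge (t + 1) dk with h1 | h1
  · have e1 : dj - dk + 1 + t = (t + 1) + (2 ^ (k - j) - 1) * dk := by
      have : (2 ^ (k - j) - 1) * dk = 2 ^ (k - j) * dk - dk := by
        rw [Nat.sub_mul, one_mul]
      omega
    have e2 : dj - dk + 1 + t + 2 ^ (r - k) * c = (t + 1) + 2 ^ (k - j) * dk := by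
      omega
    rw [e2, e1]
    rw [hA (t+1) (by omega) (by omega) (2 ^ (k - j) - 1) (by omega),
      hA (t+1) (by omega) (by omega) (2 ^ (k - j)) hqk]
  · have ht1 : t + 1 = dk := by omega
    have e1 : dj - dk + 1 + t = dj := by omega
    have e2 : dj - dk + 1 + t + 2 ^ (r - k) * c = dk + dj := by omega
    rw [e2, e1]
    rw [← H j hj (by omega) dk hdkpos (by omega)]
    exact heq

lemma sqS2 {j : ℕ} (hj : 1 ≤ j) (hjr : j ≤ r)
    (heq : w (2 ^ r * c) = w (2 ^ (r - j) * c)) :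
    ∃ j, 1 ≤ j ∧ j ≤ r ∧ ∃ x, 1 ≤ x ∧
      x + 2 * (2 ^ (r - j) * c) - 1 ≤ 2 ^ r * c ∧
      ∀ t < 2 ^ (r - j) * c, w (x + t) = w (x + t + 2 ^ (r - j) * c) := by
  set dj := 2 ^ (r - j) * c with hdj
  have hA := propA r c w H j hj hjr
  have hsplit : 2 ^ r = 2 ^ j * 2 ^ (r - j) := by
    rw [← pow_add]; congr 1; omega
  have htop : 2 ^ r * c = 2 ^ j * dj := by rw [hdj, hsplit]; ring
  have h2 : 2 ≤ 2 ^ j := by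
    calc (2:ℕ) = 2 ^ 1 := (pow_one 2).symm
    _ ≤ 2 ^ j := Nat.pow_le_pow_right (by norm_num) hj
  have hdjpos : 1 ≤ dj := by
    have : 1 ≤ 2 ^ (r - j) := Nat.one_le_two_pow
    calc 1 ≤ 1 * c := by omega
    _ ≤ 2 ^ (r - j) * c := Nat.mul_le_mul_right _ this
  have h2dj : 2 * dj ≤ 2 ^ r * c := by
    rw [htop]; exact Nat.mul_le_mul_right _ h2
  refine ⟨j, hj, hjr, 2 ^ r * c - 2 * dj + 1, by omega, by omega, ?_⟩
  intro t htlt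
  rcases Nat.lt_or_ge (t + 1) dj with h1 | h1
  · have e1 : 2 ^ r * c - 2 * dj + 1 + t = (t + 1) + (2 ^ j - 2) * dj := by
      have : (2 ^ j - 2) * dj = 2 ^ j * dj - 2 * dj := by
        rw [Nat.sub_mul]
      omega
    have e2 : 2 ^ r * c - 2 * dj + 1 + t + 2 ^ (r - j) * c = (t + 1) + (2 ^ j - 1) * dj := by
      have : (2 ^ j - 1) * dj = 2 ^ j * dj - 1 * dj := by
        rw [Nat.sub_mul]
      omega
    rw [e2, e1]
    rw [hA (t+1) (by omega) (by omega) (2 ^ j - 2) (by omega),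
      hA (t+1) (by omega) (by omega) (2 ^ j - 1) (by omega)]
  · have ht1 : t + 1 = dj := by omega
    have e1 : 2 ^ r * c - 2 * dj + 1 + t = 2 ^ r * c - dj := by omega
    have e2 : 2 ^ r * c - 2 * dj + 1 + t + 2 ^ (r - j) * c = 2 ^ r * c := by omega
    rw [e2, e1]
    have key : w (2 ^ r * c - dj) = w dj := by
      rcases Nat.eq_or_lt_of_le hj with h1j | h1j
    -- j = 1 or j ≥ 2
      · have h7 : 2 ^ j = 2 := by rw [← h1j]; exact (pow_one 2)
        have h6 : 2 ^ r * c = 2 * dj := by rw [htop, h7]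
        have : 2 ^ r * c - dj = dj := by omega
        rw [this]
      · -- j ≥ 2
        have hA' := propA r c w H (j-1) (by omega) (by omega)
        have hd2 : 2 ^ (r - (j-1)) = 2 * 2 ^ (r - j) := by
          rw [← pow_succ']; congr 1; omega
        have hd2' : 2 ^ (r - (j-1)) * c = 2 * dj := by rw [hd2, hdj]; ring
        have e3 : 2 ^ r * c - dj = dj + (2 ^ (j-1) - 1) * (2 ^ (r - (j-1)) * c) := by
          rw [hd2']
          have h4 : (2 ^ (j-1) - 1) * (2 * dj) = 2 ^ (j-1) * (2 * dj) - 2 * dj := by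
            rw [Nat.sub_mul, one_mul]
          have h5 : 2 ^ (j-1) * (2 * dj) = 2 ^ j * dj := by
            have : 2 ^ j = 2 ^ (j-1) * 2 := by
              rw [← pow_succ]; congr 1; omega
            rw [this]; ring
          omega
        have hp1 : 1 ≤ 2 ^ (j-1) := Nat.one_le_two_pow
        rw [e3, hA' dj hdjpos (by omega) (2 ^ (j-1) - 1) (by omega)]
    rw [key]; exact heq.symm
end Part1

lemma part1 (r c : ℕ) (hr : 1 ≤ r) (hc : 2 ≤ c) (w : ℕ → Fin r)
    (H : ∀ j, 1 ≤ j → j ≤ r → ∀ t, 1 ≤ t → t < 2 ^ (r - j) * c →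
        w t = w (t + 2 ^ (r - j) * c)) :
    ∃ j, 1 ≤ j ∧ j ≤ r ∧ ∃ x, 1 ≤ x ∧
      x + 2 * (2 ^ (r - j) * c) - 1 ≤ 2 ^ r * c ∧
      ∀ t < 2 ^ (r - j) * c, w (x + t) = w (x + t + 2 ^ (r - j) * c) := by
  by_contra h
  have key : ∀ a b : Fin (r + 1), a.val < b.val →
      w (if a.val = 0 then 2 ^ r * c else 2 ^ (r - a.val) * c) ≠
      w (if b.val = 0 then 2 ^ r * c else 2 ^ (r - b.val) * c) := by
    intro a b hab
    have hb0 : ¬ b.val = 0 := by omega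
    have hbr : b.val ≤ r := by omega
    rcases Nat.eq_zero_or_pos a.val with ha0 | ha0
    · simp only [ha0, if_pos rfl, if_neg hb0]
      intro heq
      exact h (sqS2 r c hc w H (by omega) hbr heq)
    · simp only [if_neg (by omega : ¬ a.val = 0), if_neg hb0]
      intro heq
      exact h (sqS1 r c hc w H ha0 hab hbr heq)
  have einj : Function.Injective
      (fun a : Fin (r+1) => w (if a.val = 0 then 2 ^ r * c else 2 ^ (r - a.val) * c)) := by
    intro a b hab
    by_contra hne
    rcases Nat.lt_trichotomy a.val b.val with h' | h' | h'
    · exact key a b h' hab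
    · exact hne (Fin.ext h')
    · exact key b a h' hab.symm
  have := Fintype.card_le_of_injective _ einj
  simp only [Fintype.card_fin] at this
  omega

def gdiv (r c t : ℕ) : ℕ :=
  ((Finset.range (r + 1)).filter (fun l => 2 ^ l * c ∣ t)).card

lemma gmul (r c : ℕ) (hc : 1 ≤ c) {j m : ℕ} (hj : j ≤ r) (hm : 1 ≤ m) :
    gdiv r c (m * (2 ^ (r - j) * c)) =
      min (r + 1) (r - j + (Nat.factorization m) 2 + 1) := by
  set a := (Nat.factorization m) 2 with ha
  have hiff : ∀ l, 2 ^ l * c ∣ m * (2 ^ (r - j) * c) ↔ l ≤ r - j + a := by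
    intro l
    have e1 : m * (2 ^ (r - j) * c) = (m * 2 ^ (r - j)) * c := by ring
    rw [e1]
    have hn : m * 2 ^ (r - j) ≠ 0 := by positivity
    rw [Nat.mul_dvd_mul_iff_right (by omega : 0 < c)]
    rw [Nat.Prime.pow_dvd_iff_le_factorization Nat.prime_two hn]
    have : (Nat.factorization (m * 2 ^ (r - j))) 2 = a + (r - j) := by
      rw [Nat.factorization_mul (by omega) (by positivity)]
      simp [Nat.Prime.factorization_pow, ha, Nat.Prime.factorization_self Nat.prime_two]
    rw [this]
    omega
  have hset : (Finset.range (r + 1)).filter (fun l => 2 ^ l * c ∣ m * (2 ^ (r - j) * c))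
      = Finset.range (min (r + 1) (r - j + a + 1)) := by
    ext l
    rw [Finset.mem_filter, Finset.mem_range, Finset.mem_range, hiff l]
    omega
  rw [gdiv, hset, Finset.card_range]

lemma ginv (r c : ℕ) (hc : 2 ≤ c) {j t : ℕ} (hj : 1 ≤ j) (hjr : j ≤ r)
    (ht : 1 ≤ t) (htlt : t < 2 ^ (r - j) * c) :
    gdiv r c (t + 2 ^ (r - j) * c) = gdiv r c t := by
  set d := 2 ^ (r - j) * c with hd
  have hiff : ∀ l ∈ Finset.range (r + 1), (2 ^ l * c ∣ t + d ↔ 2 ^ l * c ∣ t) := by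
    intro l _
    rcases le_or_gt l (r - j) with hl | hl
    · have hdvd : 2 ^ l * c ∣ d := by
        rw [hd]
        exact Nat.mul_dvd_mul (pow_dvd_pow 2 hl) dvd_rfl
      constructor
      · intro h
        have h2 := Nat.dvd_sub h hdvd
        simpa using h2
      · intro h
        exact Nat.dvd_add h hdvd
    · have h2d : 2 * d ≤ 2 ^ l * c := by
        rw [hd]
        have : 2 * (2 ^ (r - j) * c) = 2 ^ (r - j + 1) * c := by
          rw [pow_succ]; ring
        rw [this]
        exact Nat.mul_le_mul_right _ (Nat.pow_le_pow_right (by norm_num) (by omega))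
      constructor
      · intro h
        exact absurd h (Nat.not_dvd_of_pos_of_lt (by omega) (by omega))
      · intro h
        exact absurd h (Nat.not_dvd_of_pos_of_lt (by omega) (by omega))
  rw [gdiv, gdiv, Finset.filter_congr hiff]

lemma part2 (r c : ℕ) (hr : 1 ≤ r) (hc : 2 ≤ c) :
    ∃ w : ℕ → Fin (r + 1),
      (∀ j, 1 ≤ j → j ≤ r → ∀ t, 1 ≤ t → t < 2 ^ (r - j) * c →
        w t = w (t + 2 ^ (r - j) * c)) ∧
      ¬ ∃ j, 1 ≤ j ∧ j ≤ r ∧ ∃ x, 1 ≤ x ∧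
        x + 2 * (2 ^ (r - j) * c) - 1 ≤ 2 ^ r * c ∧
        ∀ t < 2 ^ (r - j) * c, w (x + t) = w (x + t + 2 ^ (r - j) * c) := by
  refine ⟨fun t => ⟨gdiv r c t % (r + 1), Nat.mod_lt _ (Nat.succ_pos r)⟩, ?_, ?_⟩
  · intro j hj hjr t ht htlt
    have := ginv r c hc hj hjr ht htlt
    simp only [Fin.mk.injEq, this]
  · rintro ⟨j, hj, hjr, x, hx, hxle, hsq⟩
    set d := 2 ^ (r - j) * c with hd
    have hdpos : 1 ≤ d := by
      have : 1 ≤ 2 ^ (r - j) := Nat.one_le_two_pow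
      calc 1 ≤ 1 * c := by omega
      _ ≤ 2 ^ (r - j) * c := Nat.mul_le_mul_right _ this
    set m := (x + d - 1) / d with hm
    have h1 := Nat.div_add_mod (x + d - 1) d
    have h2 : (x + d - 1) % d < d := Nat.mod_lt _ (by omega)
    have hcomm : m * d = d * ((x + d - 1) / d) := by rw [hm]; ring
    have hs1 : m * d ≤ x + d - 1 := by omega
    have hs2 : x ≤ m * d := by omega
    have hm1 : 1 ≤ m := by
      rcases Nat.eq_zero_or_pos m with h | h
      · exfalso; rw [h] at hs2; simp at hs2; omega
      · exact h
    have hw := hsq (m * d - x) (by omega)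
    have e0 : x + (m * d - x) = m * d := by omega
    rw [e0] at hw
    have e0' : m * d + d = (m + 1) * d := by ring
    rw [e0'] at hw
    simp only [Fin.mk.injEq] at hw
    -- hw : gdiv r c (m * d) % (r+1) = gdiv r c ((m+1) * d) % (r+1)
    have hg1 := gmul r c (by omega) hjr hm1
    have hg2 := gmul r c (by omega) hjr (by omega : 1 ≤ m + 1)
    rw [← hd] at hg1 hg2
    set a := (Nat.factorization m) 2 with ha
    set b := (Nat.factorization (m + 1)) 2 with hb
    have hab : (a = 0 ∧ 1 ≤ b) ∨ (1 ≤ a ∧ b = 0) := by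
      rcases Nat.even_or_odd m with he | ho
      · right
        constructor
        · exact (Nat.Prime.dvd_iff_one_le_factorization Nat.prime_two (by omega)).mp
            he.two_dvd
        · rw [hb]
          exact Nat.factorization_eq_zero_of_not_dvd (by
            rcases he with ⟨k, hk⟩
            omega)
      · left
        constructor
        · rw [ha]
          exact Nat.factorization_eq_zero_of_not_dvd (by
            rcases ho with ⟨k, hk⟩
            omega)
        · exact (Nat.Prime.dvd_iff_one_le_factorization Nat.prime_two (by omega)).mp
            (by rcases ho with ⟨k, hk⟩; exact ⟨k + 1, by omega⟩)
    -- now derive contradiction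
    rcases hab with ⟨ha0, hb1⟩ | ⟨ha1, hb0⟩
    · have hv1 : gdiv r c (m * d) = r - j + 1 := by rw [hg1, ha0]; omega
      have hmod1 : gdiv r c (m * d) % (r + 1) = r - j + 1 := by
        rw [hv1]; exact Nat.mod_eq_of_lt (by omega)
      rcases lt_or_ge (gdiv r c ((m + 1) * d)) (r + 1) with h' | h'
      · have hmod2 : gdiv r c ((m + 1) * d) % (r + 1) = gdiv r c ((m + 1) * d) :=
          Nat.mod_eq_of_lt h'
        omega
      · have : gdiv r c ((m + 1) * d) = r + 1 := by omega
        rw [this, Nat.mod_self] at hw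
        omega
    · have hv2 : gdiv r c ((m + 1) * d) = r - j + 1 := by rw [hg2, hb0]; omega
      have hmod2 : gdiv r c ((m + 1) * d) % (r + 1) = r - j + 1 := by
        rw [hv2]; exact Nat.mod_eq_of_lt (by omega)
      rcases lt_or_ge (gdiv r c (m * d)) (r + 1) with h' | h'
      · have hmod1 : gdiv r c (m * d) % (r + 1) = gdiv r c (m * d) :=
          Nat.mod_eq_of_lt h'
        omega
      · have : gdiv r c (m * d) = r + 1 := by omega
        rw [this, Nat.mod_self] at hw
        omega

end MinAAux


/-- `minA(i_r, 2 i_r, …, 2^{r−1} i_r) = r + 1`: for the sequence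
`i_j = 2^{r−j} * c` with `c ≥ 2` (so `i₁ = 2^{r−1} c` and the words have
length `2^r * c`), every word over an `r`-letter alphabet satisfying the
invariance conditions `w t = w (t + i_j)` (`0 < t < i_j`) contains a square
`v ++ v` with `|v| = i_j` for some `j`; over an `(r+1)`-letter alphabet there
is such a word with no square of these half-lengths. -/
theorem minA_doubling_sequence (r c : ℕ) (hr : 1 ≤ r) (hc : 2 ≤ c) :
    (∀ w : ℕ → Fin r,
      (∀ j, 1 ≤ j → j ≤ r → ∀ t, 1 ≤ t → t < 2 ^ (r - j) * c →
        w t = w (t + 2 ^ (r - j) * c)) →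
      ∃ j, 1 ≤ j ∧ j ≤ r ∧ ∃ x, 1 ≤ x ∧
        x + 2 * (2 ^ (r - j) * c) - 1 ≤ 2 ^ r * c ∧
        ∀ t < 2 ^ (r - j) * c, w (x + t) = w (x + t + 2 ^ (r - j) * c)) ∧
    (∃ w : ℕ → Fin (r + 1),
      (∀ j, 1 ≤ j → j ≤ r → ∀ t, 1 ≤ t → t < 2 ^ (r - j) * c →
        w t = w (t + 2 ^ (r - j) * c)) ∧
      ¬ ∃ j, 1 ≤ j ∧ j ≤ r ∧ ∃ x, 1 ≤ x ∧
        x + 2 * (2 ^ (r - j) * c) - 1 ≤ 2 ^ r * c ∧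
        ∀ t < 2 ^ (r - j) * c, w (x + t) = w (x + t + 2 ^ (r - j) * c)) := by
  exact ⟨fun w H => MinAAux.part1 r c hr hc w H, MinAAux.part2 r c hr hc⟩
end
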